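/- arXiv:1211.2182 — 4 statements merged into one kernel-verified Lean document; each statement's English description precedes it below -/
import Mathlib

section
/- Let q, h, k be positive integers with gcd(h,k) = 1, and for a positive integer d write d_{(h)} := d/gcd(d,h) and d_{(k)} := d/gcd(d,k). Then: (1) {d ≥ 1 : gcd(d_{(h)}, q) = 1 and gcd(d_{(k)}, q) = 1} = {d ≥ 1 : gcd(d,q) = 1}; (2) {d ≥ 1 : gcd(d_{(h)}, q) = q and gcd(d_{(k)}, q) = q} = {q·h(q)·k(q)·l : l ≥ 1}; (3) if q | h then {d ≥ 1 : gcd(d_{(h)}, q) = 1 and gcd(d_{(k)}, q) = q} = {q·m·l : m divides h(q)/q, l ≥ 1, gcd(l,q) = 1}, while if q ∤ h this set is empty; (4) symmetrically, if q | k then {d ≥ 1 : gcd(d_{(h)}, q) = q and gcd(d_{(k)}, q) = 1} = {q·m·l : m divides k(q)/q, l ≥ 1, gcd(l,q) = 1}, while if q ∤ k this set is empty. -/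
open Complex MeasureTheory Filter Topology

noncomputable section

/-- `e_d(c) = exp(2πi c/d)`. -/
def eC (d : ℕ) (c : ℤ) : ℂ := Complex.exp (2 * Real.pi * Complex.I * c / d)

/-- The conjugate Dirichlet character. -/
def conjChar {q : ℕ} (χ : DirichletCharacter ℂ q) : DirichletCharacter ℂ q :=
  χ.ringHomComp (starRingEnd ℂ)

/-- Gauss sum `G(χ) = Σ_{m=1}^{q} χ(m) e_q(m)` (here summed over `m < q`, which is the same). -/
def gaussC {q : ℕ} (χ : DirichletCharacter ℂ q) : ℂ :=
  ∑ m ∈ Finset.range q, χ (m : ZMod q) * eC q m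

/-- `f_{α,β}(n,χ) = Σ_{n₁n₂=n} n₁^{-α} n₂^{-β} χ(n₂)`. -/
def fab {q : ℕ} (χ : DirichletCharacter ℂ q) (α β : ℂ) (n : ℕ) : ℂ :=
  ∑ d ∈ n.divisors, ((n / d : ℕ) : ℂ) ^ (-α) * (d : ℂ) ^ (-β) * χ (d : ZMod q)

/-- `σ_{α,β}(n) = Σ_{n₁n₂=n} n₁^{-α} n₂^{-β}`. -/
def sigmaab (α β : ℂ) (n : ℕ) : ℂ :=
  ∑ d ∈ n.divisors, ((n / d : ℕ) : ℂ) ^ (-α) * (d : ℂ) ^ (-β)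

/-- the `q`-part `n(q)` of `n`. -/
def qPart (q n : ℕ) : ℕ := ∏ p ∈ n.primeFactors.filter (· ∣ q), p ^ (n.factorization p)

/-- local Euler factor quotient `B_{α,β,γ,δ,h}(s)`, with `χ₁` attached to `(α,β)` and
`χ₂` attached to `(γ,δ)` (the shifted one). -/
def Bh {q : ℕ} (χ₁ χ₂ : DirichletCharacter ℂ q) (α β γ δ : ℂ) (h : ℕ) (s : ℂ) : ℂ :=
  ∏ p ∈ h.primeFactors,
    (∑' j : ℕ, fab χ₁ α β (p ^ j) * fab χ₂ γ δ (p ^ (h.factorization p + j)) *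
        (p : ℂ) ^ (-((j : ℂ) * (1 + s)))) /
    (∑' j : ℕ, fab χ₁ α β (p ^ j) * fab χ₂ γ δ (p ^ j) * (p : ℂ) ^ (-((j : ℂ) * (1 + s))))

/-- `B_{α,β,γ,δ,h,k}(s) = B_{α,β,γ,δ,h}(s,χ̄) B_{γ,δ,α,β,k}(s,χ)`. -/
def Bfull {q : ℕ} (χ : DirichletCharacter ℂ q) (α β γ δ : ℂ) (h k : ℕ) (s : ℂ) : ℂ :=
  Bh χ (conjChar χ) α β γ δ h s * Bh (conjChar χ) χ γ δ α β k s

/-- `A_{α,β,γ,δ}(s)`. -/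
def Az {q : ℕ} [NeZero q] (χ : DirichletCharacter ℂ q) (α β γ δ : ℂ) (s : ℂ) : ℂ :=
  riemannZeta (1 + α + γ + s) * riemannZeta (1 + β + δ + s) *
    DirichletCharacter.LFunction χ (1 + β + γ + s) *
    DirichletCharacter.LFunction (conjChar χ) (1 + α + δ + s) /
    riemannZeta (2 + α + β + γ + δ + 2 * s) *
    ∏ p ∈ q.primeFactors,
      (1 - (p : ℂ) ^ (-1 - s - β - δ)) / (1 - (p : ℂ) ^ (-2 - 2 * s - α - β - γ - δ))

/-- `Z_{α,β,γ,δ,h,k}(s) = A_{α,β,γ,δ}(s) B_{α,β,γ,δ,h,k}(s)`. -/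
def Zfull {q : ℕ} [NeZero q] (χ : DirichletCharacter ℂ q) (α β γ δ : ℂ) (h k : ℕ) (s : ℂ) : ℂ :=
  Az χ α β γ δ s * Bfull χ α β γ δ h k s

/-- `A′_{α,β,γ,δ}(s,χ)`. -/
def A'z {q : ℕ} [NeZero q] (χ : DirichletCharacter ℂ q) (α β γ δ : ℂ) (s : ℂ) : ℂ :=
  DirichletCharacter.LFunction χ (1 + α + γ + s) * DirichletCharacter.LFunction χ (1 + β + δ + s) *
    DirichletCharacter.LFunction χ (1 + α + δ + s) * DirichletCharacter.LFunction χ (1 + β + γ + s) /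
    DirichletCharacter.LFunction (χ ^ 2) (2 + α + β + γ + δ + 2 * s)

/-- `B′_{α,β,γ,δ,h}(s,χ)`. -/
def B'h {q : ℕ} (χ : DirichletCharacter ℂ q) (α β γ δ : ℂ) (h : ℕ) (s : ℂ) : ℂ :=
  ∏ p ∈ h.primeFactors,
    (∑' j : ℕ, (χ (p : ZMod q)) ^ j * sigmaab α β (p ^ j) * sigmaab γ δ (p ^ (h.factorization p + j)) *
        (p : ℂ) ^ (-((j : ℂ) * (1 + s)))) /
    (∑' j : ℕ, (χ (p : ZMod q)) ^ j * sigmaab α β (p ^ j) * sigmaab γ δ (p ^ j) *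
        (p : ℂ) ^ (-((j : ℂ) * (1 + s))))

/-- `B′_{α,β,γ,δ,h,k}(s,χ) = B′_{α,β,γ,δ,h}(s,χ) B′_{γ,δ,α,β,k}(s,χ)`. -/
def B'full {q : ℕ} (χ : DirichletCharacter ℂ q) (α β γ δ : ℂ) (h k : ℕ) (s : ℂ) : ℂ :=
  B'h χ α β γ δ h s * B'h χ γ δ α β k s

/-- `Z′_{α,β,γ,δ,h,k}(s,χ) = conj(G(χ)) A′_{α,β,γ,δ}(s,χ) B′_{α,β,γ,δ,h,k}(s,χ)`. -/
def Z'full {q : ℕ} [NeZero q] (χ : DirichletCharacter ℂ q) (α β γ δ : ℂ) (h k : ℕ) (s : ℂ) : ℂ :=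
  (starRingEnd ℂ) (gaussC χ) * A'z χ α β γ δ s * B'full χ α β γ δ h k s

/-- `𝔞 = 0` if `χ(-1) = 1`, else `1`. -/
def frakA {q : ℕ} (χ : DirichletCharacter ℂ q) : ℕ := if χ (-1) = 1 then 0 else 1

/-- the Gamma-factor ratio `g_{α,β,γ,δ}(s,t)`. -/
def gfun {q : ℕ} (χ : DirichletCharacter ℂ q) (α β γ δ : ℂ) (s : ℂ) (t : ℝ) : ℂ :=
  (Complex.Gamma ((1 / 2 + α + s + Complex.I * t) / 2) *
      Complex.Gamma ((1 / 2 + β + s + Complex.I * t + (frakA χ : ℂ)) / 2) *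
      Complex.Gamma ((1 / 2 + γ + s - Complex.I * t) / 2) *
      Complex.Gamma ((1 / 2 + δ + s - Complex.I * t + (frakA χ : ℂ)) / 2)) /
    (Complex.Gamma ((1 / 2 + α + Complex.I * t) / 2) *
      Complex.Gamma ((1 / 2 + β + Complex.I * t + (frakA χ : ℂ)) / 2) *
      Complex.Gamma ((1 / 2 + γ - Complex.I * t) / 2) *
      Complex.Gamma ((1 / 2 + δ - Complex.I * t + (frakA χ : ℂ)) / 2))

/-- `X_{α,β,γ,δ,t}`. -/
def Xfun {q : ℕ} (χ : DirichletCharacter ℂ q) (α β γ δ : ℂ) (t : ℝ) : ℂ :=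
  (Real.pi : ℂ) ^ (α + β + γ + δ) * (q : ℂ) ^ (-β - δ) *
    (Complex.Gamma ((1 / 2 - α - Complex.I * t) / 2) *
      Complex.Gamma ((1 / 2 - β - Complex.I * t + (frakA χ : ℂ)) / 2) *
      Complex.Gamma ((1 / 2 - γ + Complex.I * t) / 2) *
      Complex.Gamma ((1 / 2 - δ + Complex.I * t + (frakA χ : ℂ)) / 2)) /
    (Complex.Gamma ((1 / 2 + α + Complex.I * t) / 2) *
      Complex.Gamma ((1 / 2 + β + Complex.I * t + (frakA χ : ℂ)) / 2) *
      Complex.Gamma ((1 / 2 + γ - Complex.I * t) / 2) *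
      Complex.Gamma ((1 / 2 + δ - Complex.I * t + (frakA χ : ℂ)) / 2))

/-- `V_{α,β,γ,δ,t}(x)`, as the contour integral along `Re s = 1`. -/
def Vfun {q : ℕ} (χ : DirichletCharacter ℂ q) (α β γ δ : ℂ) (G : ℂ → ℂ) (t : ℝ) (x : ℝ) : ℂ :=
  (1 / (2 * Real.pi)) *
    ∫ u : ℝ, G (1 + Complex.I * u) / (1 + Complex.I * u) *
      gfun χ α β γ δ (1 + Complex.I * u) t * (x : ℂ) ^ (-(1 + Complex.I * u))

/-- the Ramanujan sum `c_d(r)`. -/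
def cdR (d r : ℕ) : ℂ :=
  ∑ c ∈ (Finset.Icc 1 d).filter (fun c => Nat.gcd c d = 1), eC d (c * r)

/-- the twisted Ramanujan-type sum `c_d(r,χ) = Σ_{(c,d)=1} χ(c) e_d(-cr)`. -/
def cdChi {q : ℕ} (χ : DirichletCharacter ℂ q) (d r : ℕ) : ℂ :=
  ∑ c ∈ (Finset.Icc 1 d).filter (fun c => Nat.gcd c d = 1),
    χ (c : ZMod q) * eC d (-((c : ℤ) * r))

/-- `σ_{α,β}(n, a/d, χ)`. -/
def sigmaE {q : ℕ} (χ : DirichletCharacter ℂ q) (α β : ℂ) (d : ℕ) (a : ℤ) (n : ℕ) : ℂ :=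
  ∑ u ∈ n.divisors, (u : ℂ) ^ (-α) * ((n / u : ℕ) : ℂ) ^ (-β) *
    ∑ b ∈ Finset.Icc 1 (Nat.lcm d q),
      if ((b : ℕ) : ZMod d) = ((a * u : ℤ) : ZMod d)
      then χ (b : ZMod q) * eC (Nat.lcm d q) b else 0

/-- local factor `C_{11,α,β,γ,δ,h}(s,ψ)`. -/
def C11h {q : ℕ} (ψ : DirichletCharacter ℂ q) (α β γ δ : ℂ) (h : ℕ) (s : ℂ) : ℂ :=
  ∏ p ∈ h.primeFactors.filter (fun p => ¬ p ∣ q),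
    (let m : ℕ := h.factorization p
     ((1 - ψ (p : ZMod q) ^ (m + 1) * (p : ℂ) ^ (-(((m : ℂ) + 1) * (α + δ + 2 * s))))
      - (p : ℂ) ^ (-1 : ℂ) *
        ((ψ (p : ZMod q) * (p : ℂ) ^ (γ - δ) + (p : ℂ) ^ (-β - δ - 2 * s)) *
          (1 - ψ (p : ZMod q) ^ m * (p : ℂ) ^ (-((m : ℂ) * (α + δ + 2 * s)))))
      + (p : ℂ) ^ (-2 : ℂ) *
        (ψ (p : ZMod q) * (p : ℂ) ^ (-β + γ - 2 * δ - 2 * s)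
          - ψ (p : ZMod q) ^ m * (p : ℂ) ^ (-((m : ℂ) * (α + δ + 2 * s))) * (p : ℂ) ^ (α - β + γ - δ))) /
     ((1 - ψ (p : ZMod q) * (p : ℂ) ^ (-α - δ - 2 * s)) * (1 - (p : ℂ) ^ (-2 + α - β + γ - δ))))

/-- `C_{11,α,β,γ,δ,h,k}(s)`. -/
def C11full {q : ℕ} (χ : DirichletCharacter ℂ q) (α β γ δ : ℂ) (h k : ℕ) (s : ℂ) : ℂ :=
  C11h (conjChar χ) α β γ δ h s * C11h χ γ δ α β k s

/-- local factor `C_{22,α,β,γ,δ,h}(s,ψ)`. -/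
def C22h {q : ℕ} (ψ : DirichletCharacter ℂ q) (α β γ δ : ℂ) (h : ℕ) (s : ℂ) : ℂ :=
  ∏ p ∈ h.primeFactors.filter (fun p => ¬ p ∣ q),
    (let m : ℕ := h.factorization p
     (((p : ℂ) ^ (-((m : ℂ) * (β + γ + 2 * s))) - ψ (p : ZMod q) ^ (m + 1) * (p : ℂ) ^ (β + γ + 2 * s))
      - (p : ℂ) ^ (-1 : ℂ) *
        (((p : ℂ) ^ (-((m : ℂ) * (β + γ + 2 * s))) - ψ (p : ZMod q) ^ m) *
          ((p : ℂ) ^ (β + δ + 2 * s) + ψ (p : ZMod q) * (p : ℂ) ^ (-α + β)))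
      + (p : ℂ) ^ (-2 : ℂ) *
        ((p : ℂ) ^ (-((m : ℂ) * (β + γ + 2 * s))) * ψ (p : ZMod q) * (p : ℂ) ^ (-α + 2 * β + δ + 2 * s)
          - ψ (p : ZMod q) ^ m * (p : ℂ) ^ (-α + β - γ + δ))) /
     ((1 - ψ (p : ZMod q) * (p : ℂ) ^ (β + γ + 2 * s)) * (1 - (p : ℂ) ^ (-2 - α + β - γ + δ))))

/-- `C_{22,α,β,γ,δ,h,k}(s)`. -/
def C22full {q : ℕ} (χ : DirichletCharacter ℂ q) (α β γ δ : ℂ) (h k : ℕ) (s : ℂ) : ℂ :=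
  (qPart q h : ℂ) ^ (-β - γ - 2 * s) * (qPart q k : ℂ) ^ (-α - δ - 2 * s) *
    C22h (conjChar χ) α β γ δ h s * C22h χ γ δ α β k s

/-- local factor `C_{12,α,β,γ,δ,h}(s)`. -/
def C12h {q : ℕ} (χ : DirichletCharacter ℂ q) (α β γ δ : ℂ) (h : ℕ) (s : ℂ) : ℂ :=
  ∏ p ∈ h.primeFactors.filter (fun p => ¬ p ∣ q),
    (let m : ℕ := h.factorization p
     ((1 - (p : ℂ) ^ (-(((m : ℂ) + 1) * (α + γ + 2 * s))))
      - (p : ℂ) ^ (-1 : ℂ) *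
        (χ (p : ZMod q) * ((p : ℂ) ^ (δ - γ) + (p : ℂ) ^ (-β - γ - 2 * s)) *
          (1 - (p : ℂ) ^ (-((m : ℂ) * (α + γ + 2 * s)))))
      + (p : ℂ) ^ (-2 : ℂ) *
        (χ (p : ZMod q) ^ 2 * (p : ℂ) ^ (δ - β) *
          ((p : ℂ) ^ (-(2 * (γ + s))) - (p : ℂ) ^ (2 * (α + s)) * (p : ℂ) ^ (-(((m : ℂ) + 1) * (α + γ + 2 * s)))))) /
     ((1 - (p : ℂ) ^ (-α - γ - 2 * s)) * (1 - χ (p : ZMod q) ^ 2 * (p : ℂ) ^ (-2 + α - β - γ + δ))))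

/-- `C_{12,α,β,γ,δ,h,k}(s) = C_{12,α,β,γ,δ,h}(s) C_{12,δ,γ,β,α,k}(s)`. -/
def C12full {q : ℕ} (χ : DirichletCharacter ℂ q) (α β γ δ : ℂ) (h k : ℕ) (s : ℂ) : ℂ :=
  C12h χ α β γ δ h s * C12h χ δ γ β α k s

end

section statement7aux

open Nat

lemma qPart_fact {q n : ℕ} (hn : n ≠ 0) (p : ℕ) :
    (qPart q n).factorization p = if p ∣ q then n.factorization p else 0 := by
  classical
  unfold qPart
  rw [Nat.factorization_prod (fun r hr => pow_ne_zero _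
      (Nat.prime_of_mem_primeFactors (Finset.mem_filter.1 hr).1).pos.ne')]
  rw [Finset.sum_apply']
  rw [Finset.sum_congr rfl (fun r hr => by
    rw [(Nat.prime_of_mem_primeFactors (Finset.mem_filter.1 hr).1).factorization_pow,
      Finsupp.single_apply])]
  rw [Finset.sum_ite_eq' _ p _]
  by_cases hpq : p ∣ q
  · by_cases hpn : p ∈ n.primeFactors
    · simp [hpq, hpn, Finset.mem_filter]
    · have h0 : n.factorization p = 0 := by
        rw [← Nat.support_factorization] at hpn
        exact Finsupp.notMem_support_iff.1 hpn
      simp [hpq, h0, Finset.mem_filter]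
  · simp [hpq, Finset.mem_filter]

lemma qPart_ne_zero (q n : ℕ) : qPart q n ≠ 0 := by
  unfold qPart
  exact Finset.prod_ne_zero_iff.2 fun r hr => pow_ne_zero _
    (Nat.prime_of_mem_primeFactors (Finset.mem_filter.1 hr).1).pos.ne'

lemma qPart_dvd {q n : ℕ} (hn : n ≠ 0) : qPart q n ∣ n := by
  rw [← Nat.factorization_le_iff_dvd (qPart_ne_zero q n) hn]
  intro p
  rw [qPart_fact hn p]
  split <;> simp

lemma div_gcd_fact {d h : ℕ} (hd : d ≠ 0) (hh : h ≠ 0) (p : ℕ) :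
    (d / Nat.gcd d h).factorization p
      = d.factorization p - min (d.factorization p) (h.factorization p) := by
  rw [Nat.factorization_div (Nat.gcd_dvd_left d h), Nat.factorization_gcd hd hh,
    Finsupp.tsub_apply, Finsupp.inf_apply]

lemma div_gcd_ne_zero {d h : ℕ} (hd : d ≠ 0) : d / Nat.gcd d h ≠ 0 :=
  Nat.div_ne_zero_iff_of_dvd (Nat.gcd_dvd_left d h) |>.2 ⟨hd, Nat.gcd_ne_zero_left hd⟩

lemma condA {d h q : ℕ} (hd : d ≠ 0) (hh : h ≠ 0) :
    Nat.gcd (d / Nat.gcd d h) q = 1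
      ↔ ∀ p : ℕ, p.Prime → p ∣ q → d.factorization p ≤ h.factorization p := by
  constructor
  · intro hc p hp hpq
    by_contra hlt
    push_neg at hlt
    have hdvd : p ∣ d / Nat.gcd d h := by
      apply Nat.dvd_of_factorization_pos
      rw [div_gcd_fact hd hh p]
      omega
    have : p ∣ 1 := hc ▸ Nat.dvd_gcd hdvd hpq
    exact hp.one_lt.ne' (Nat.eq_one_of_dvd_one this)
  · intro hcond
    apply Nat.coprime_of_dvd
    intro p hp hpx hpq
    have h1 := hcond p hp hpq
    have h2 : 0 < (d / Nat.gcd d h).factorization p :=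
      hp.factorization_pos_of_dvd (div_gcd_ne_zero hd) hpx
    rw [div_gcd_fact hd hh p] at h2
    omega

lemma condB {d h q : ℕ} (hd : d ≠ 0) (hh : h ≠ 0) (hq : q ≠ 0) :
    Nat.gcd (d / Nat.gcd d h) q = q ↔ q * qPart q h ∣ d := by
  have hx : d / Nat.gcd d h ≠ 0 := div_gcd_ne_zero hd
  have step1 : Nat.gcd (d / Nat.gcd d h) q = q ↔ q ∣ d / Nat.gcd d h :=
    ⟨fun e => e ▸ Nat.gcd_dvd_left _ q, Nat.gcd_eq_right⟩
  rw [step1, ← Nat.factorization_le_iff_dvd hq hx,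
    ← Nat.factorization_le_iff_dvd (mul_ne_zero hq (qPart_ne_zero q h)) hd]
  constructor
  · intro H p
    have h1 := H p
    rw [div_gcd_fact hd hh p] at h1
    rw [Nat.factorization_mul hq (qPart_ne_zero q h), Finsupp.add_apply, qPart_fact hh p]
    by_cases hpq : p ∣ q
    · by_cases hp : p.Prime
      · have hq1 : 0 < q.factorization p := hp.factorization_pos_of_dvd hq hpq
        simp only [if_pos hpq]
        omega
      · simp [if_pos hpq, Nat.factorization_eq_zero_of_not_prime _ hp]
    · simp [if_neg hpq, Nat.factorization_eq_zero_of_not_dvd hpq]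
  · intro H p
    have h1 := H p
    rw [Nat.factorization_mul hq (qPart_ne_zero q h), Finsupp.add_apply, qPart_fact hh p] at h1
    rw [div_gcd_fact hd hh p]
    by_cases hpq : p ∣ q
    · rw [if_pos hpq] at h1; omega
    · simp [Nat.factorization_eq_zero_of_not_dvd hpq]

lemma part1 {q h k : ℕ} (hq : q ≠ 0) (hh : h ≠ 0) (hk : k ≠ 0) (hhk : Nat.Coprime h k) :
    {d : ℕ | 1 ≤ d ∧ Nat.gcd (d / Nat.gcd d h) q = 1 ∧ Nat.gcd (d / Nat.gcd d k) q = 1}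
      = {d : ℕ | 1 ≤ d ∧ Nat.gcd d q = 1} := by
  ext d
  simp only [Set.mem_setOf_eq]
  constructor
  · rintro ⟨hd1, hA, hB⟩
    have hd : d ≠ 0 := by omega
    refine ⟨hd1, Nat.coprime_of_dvd fun p hp hpd hpq => ?_⟩
    have h1 := (condA hd hh).1 hA p hp hpq
    have h2 := (condA hd hk).1 hB p hp hpq
    have hvd : 0 < d.factorization p := hp.factorization_pos_of_dvd hd hpd
    have hph : p ∣ h := Nat.dvd_of_factorization_pos (by omega)
    have hpk : p ∣ k := Nat.dvd_of_factorization_pos (by omega)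
    have hp1 : p ∣ 1 := hhk ▸ Nat.dvd_gcd hph hpk
    exact hp.one_lt.ne' (Nat.eq_one_of_dvd_one hp1)
  · rintro ⟨hd1, hc⟩
    have hd : d ≠ 0 := by omega
    have key : ∀ p : ℕ, p.Prime → p ∣ q → d.factorization p = 0 := by
      intro p hp hpq
      apply Nat.factorization_eq_zero_of_not_dvd
      intro hpd
      have hp1 : p ∣ 1 := hc ▸ Nat.dvd_gcd hpd hpq
      exact hp.one_lt.ne' (Nat.eq_one_of_dvd_one hp1)
    exact ⟨hd1, (condA hd hh).2 fun p hp hpq => by rw [key p hp hpq]; omega,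
      (condA hd hk).2 fun p hp hpq => by rw [key p hp hpq]; omega⟩

lemma part2 {q h k : ℕ} (hq : q ≠ 0) (hh : h ≠ 0) (hk : k ≠ 0) (hhk : Nat.Coprime h k) :
    {d : ℕ | 1 ≤ d ∧ Nat.gcd (d / Nat.gcd d h) q = q ∧ Nat.gcd (d / Nat.gcd d k) q = q}
      = {d : ℕ | ∃ l : ℕ, 1 ≤ l ∧ d = q * qPart q h * qPart q k * l} := by
  have hcop : Nat.Coprime (qPart q h) (qPart q k) :=
    Nat.Coprime.coprime_dvd_left (qPart_dvd hh)
      (Nat.Coprime.coprime_dvd_right (qPart_dvd hk) hhk)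
  have hN : q * qPart q h * qPart q k ≠ 0 :=
    mul_ne_zero (mul_ne_zero hq (qPart_ne_zero q h)) (qPart_ne_zero q k)
  ext d
  simp only [Set.mem_setOf_eq]
  constructor
  · rintro ⟨hd1, hA, hB⟩
    have hd : d ≠ 0 := by omega
    have h1 := (condB hd hh hq).1 hA
    have h2 := (condB hd hk hq).1 hB
    have hlcm : Nat.lcm (q * qPart q h) (q * qPart q k) ∣ d := Nat.lcm_dvd h1 h2
    rw [Nat.lcm_mul_left, Nat.Coprime.lcm_eq_mul hcop] at hlcm
    obtain ⟨l, hl⟩ := hlcm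
    refine ⟨l, ?_, by rw [hl]; ring⟩
    rcases Nat.eq_zero_or_pos l with h0 | h0
    · exact absurd (by rw [hl, h0, mul_zero]) hd
    · exact h0
  · rintro ⟨l, hl1, rfl⟩
    have hd : q * qPart q h * qPart q k * l ≠ 0 := mul_ne_zero hN (by omega)
    exact ⟨Nat.one_le_iff_ne_zero.2 hd, (condB hd hh hq).2 ⟨qPart q k * l, by ring⟩,
      (condB hd hk hq).2 ⟨qPart q h * l, by ring⟩⟩

lemma part3 {q h k : ℕ} (hq : q ≠ 0) (hh : h ≠ 0) (hk : k ≠ 0) (hhk : Nat.Coprime h k) :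
    (q ∣ h →
      {d : ℕ | 1 ≤ d ∧ Nat.gcd (d / Nat.gcd d h) q = 1 ∧ Nat.gcd (d / Nat.gcd d k) q = q}
        = {d : ℕ | ∃ m l : ℕ, m ∣ qPart q h / q ∧ 1 ≤ l ∧ Nat.gcd l q = 1 ∧ d = q * m * l}) ∧
    (¬ q ∣ h →
      {d : ℕ | 1 ≤ d ∧ Nat.gcd (d / Nat.gcd d h) q = 1 ∧ Nat.gcd (d / Nat.gcd d k) q = q}
        = ∅) := by
  constructor
  · intro hqh
    have hqQh : q ∣ qPart q h := by
      rw [← Nat.factorization_le_iff_dvd hq (qPart_ne_zero q h)]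
      intro p
      rw [qPart_fact hh p]
      by_cases hpq : p ∣ q
      · rw [if_pos hpq]
        exact (Nat.factorization_le_iff_dvd hq hh).2 hqh p
      · simp [Nat.factorization_eq_zero_of_not_dvd hpq]
    have hQhq : qPart q h / q ≠ 0 :=
      (Nat.div_ne_zero_iff_of_dvd hqQh).2 ⟨qPart_ne_zero q h, hq⟩
    ext d
    simp only [Set.mem_setOf_eq]
    constructor
    · rintro ⟨hd1, hA, hB⟩
      have hd : d ≠ 0 := by omega
      have hA' := (condA hd hh).1 hA
      have hB' := (condB hd hk hq).1 hB
      have hqg : q ∣ qPart q d := by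
        rw [← Nat.factorization_le_iff_dvd hq (qPart_ne_zero q d)]
        intro p
        rw [qPart_fact hd p]
        by_cases hpq : p ∣ q
        · rw [if_pos hpq]
          have hx := (Nat.factorization_le_iff_dvd
            (mul_ne_zero hq (qPart_ne_zero q k)) hd).2 hB' p
          rw [Nat.factorization_mul hq (qPart_ne_zero q k), Finsupp.add_apply] at hx
          omega
        · simp [Nat.factorization_eq_zero_of_not_dvd hpq]
      have hgd : qPart q d ∣ d := qPart_dvd hd
      have hg0 : qPart q d ≠ 0 := qPart_ne_zero q d
      have hl0 : 0 < d / qPart q d :=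
        Nat.div_pos (Nat.le_of_dvd (by omega) hgd) (Nat.pos_of_ne_zero hg0)
      refine ⟨qPart q d / q, d / qPart q d, ?_, hl0, ?_, ?_⟩
      · rw [← Nat.factorization_le_iff_dvd
          ((Nat.div_ne_zero_iff_of_dvd hqg).2 ⟨hg0, hq⟩) hQhq]
        intro p
        rw [Nat.factorization_div hqg, Nat.factorization_div hqQh, Finsupp.tsub_apply,
          Finsupp.tsub_apply, qPart_fact hd p, qPart_fact hh p]
        by_cases hpq : p ∣ q
        · simp only [if_pos hpq]
          by_cases hp : p.Prime
          · have := hA' p hp hpq; omega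
          · simp [Nat.factorization_eq_zero_of_not_prime _ hp]
        · simp [if_neg hpq]
      · apply Nat.coprime_of_dvd
        intro p hp hpl hpq
        have hx := hp.factorization_pos_of_dvd (by omega) hpl
        rw [Nat.factorization_div hgd, Finsupp.tsub_apply, qPart_fact hd p, if_pos hpq] at hx
        omega
      · rw [Nat.mul_div_cancel' hqg, Nat.mul_div_cancel' hgd]
    · rintro ⟨m, l, hm, hl1, hlq, rfl⟩
      have hm0 : m ≠ 0 := (Nat.pos_of_dvd_of_pos hm (Nat.pos_of_ne_zero hQhq)).ne'
      have hl0 : l ≠ 0 := by omega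
      have hd : q * m * l ≠ 0 := mul_ne_zero (mul_ne_zero hq hm0) hl0
      refine ⟨Nat.one_le_iff_ne_zero.2 hd, ?_, ?_⟩
      · apply (condA hd hh).2
        intro p hp hpq
        rw [Nat.factorization_mul (mul_ne_zero hq hm0) hl0, Nat.factorization_mul hq hm0,
          Finsupp.add_apply, Finsupp.add_apply]
        have hlp : l.factorization p = 0 := Nat.factorization_eq_zero_of_not_dvd
          (fun hpl => hp.one_lt.ne' (Nat.eq_one_of_dvd_one (hlq ▸ Nat.dvd_gcd hpl hpq)))
        have hmp := (Nat.factorization_le_iff_dvd hm0 hQhq).2 hm p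
        rw [Nat.factorization_div hqQh, Finsupp.tsub_apply, qPart_fact hh p, if_pos hpq] at hmp
        have hqh' := (Nat.factorization_le_iff_dvd hq hh).2 hqh p
        omega
      · apply (condB hd hk hq).2
        rw [← Nat.factorization_le_iff_dvd (mul_ne_zero hq (qPart_ne_zero q k)) hd]
        intro p
        rw [Nat.factorization_mul hq (qPart_ne_zero q k), Finsupp.add_apply, qPart_fact hk p,
          Nat.factorization_mul (mul_ne_zero hq hm0) hl0, Nat.factorization_mul hq hm0,
          Finsupp.add_apply, Finsupp.add_apply]
        by_cases hpq : p ∣ q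
        · rw [if_pos hpq]
          by_cases hp : p.Prime
          · have hkp : k.factorization p = 0 := by
              apply Nat.factorization_eq_zero_of_not_dvd
              intro hpk
              exact hp.one_lt.ne' (Nat.eq_one_of_dvd_one
                (hhk ▸ Nat.dvd_gcd (hpq.trans hqh) hpk))
            omega
          · simp [Nat.factorization_eq_zero_of_not_prime _ hp]
        · simp [if_neg hpq, Nat.factorization_eq_zero_of_not_dvd hpq]
  · intro hqh
    ext d
    simp only [Set.mem_setOf_eq, Set.mem_empty_iff_false, iff_false]
    rintro ⟨hd1, hA, hB⟩
    have hd : d ≠ 0 := by omega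
    rw [← Nat.factorization_le_iff_dvd hq hh] at hqh
    have hex : ∃ p, h.factorization p < q.factorization p := by
      by_contra hc
      push_neg at hc
      exact hqh fun p => hc p
    obtain ⟨p, hplt⟩ := hex
    have hq1 : 0 < q.factorization p := by omega
    have hpp : p.Prime := Nat.prime_of_mem_primeFactors (by
      rw [← Nat.support_factorization]
      exact Finsupp.mem_support_iff.2 hq1.ne')
    have hpq : p ∣ q := Nat.dvd_of_factorization_pos (by omega)
    have h1 := (condA hd hh).1 hA p hpp hpq
    have h2 := (Nat.factorization_le_iff_dvd (mul_ne_zero hq (qPart_ne_zero q k)) hd).2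
      ((condB hd hk hq).1 hB) p
    rw [Nat.factorization_mul hq (qPart_ne_zero q k), Finsupp.add_apply] at h2
    have h3 : q.factorization p ≤ d.factorization p := le_trans (Nat.le_add_right _ _) h2
    exact absurd (h3.trans h1) (Nat.not_le_of_lt hplt)

end statement7aux


/-- description of the sets `P_{11}`, `P_{22}`, `P_{12}`, `P_{21}`
(Lemma 3 of the paper). -/
theorem statement_7 (q h k : ℕ) (hq : 0 < q) (hh : 0 < h) (hk : 0 < k)
    (hhk : Nat.Coprime h k) :
    ({d : ℕ | 1 ≤ d ∧ Nat.gcd (d / Nat.gcd d h) q = 1 ∧ Nat.gcd (d / Nat.gcd d k) q = 1}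
        = {d : ℕ | 1 ≤ d ∧ Nat.gcd d q = 1}) ∧
    ({d : ℕ | 1 ≤ d ∧ Nat.gcd (d / Nat.gcd d h) q = q ∧ Nat.gcd (d / Nat.gcd d k) q = q}
        = {d : ℕ | ∃ l : ℕ, 1 ≤ l ∧ d = q * qPart q h * qPart q k * l}) ∧
    ((q ∣ h →
      {d : ℕ | 1 ≤ d ∧ Nat.gcd (d / Nat.gcd d h) q = 1 ∧ Nat.gcd (d / Nat.gcd d k) q = q}
        = {d : ℕ | ∃ m l : ℕ, m ∣ qPart q h / q ∧ 1 ≤ l ∧ Nat.gcd l q = 1 ∧ d = q * m * l}) ∧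
     (¬ q ∣ h →
      {d : ℕ | 1 ≤ d ∧ Nat.gcd (d / Nat.gcd d h) q = 1 ∧ Nat.gcd (d / Nat.gcd d k) q = q}
        = ∅)) ∧
    ((q ∣ k →
      {d : ℕ | 1 ≤ d ∧ Nat.gcd (d / Nat.gcd d h) q = q ∧ Nat.gcd (d / Nat.gcd d k) q = 1}
        = {d : ℕ | ∃ m l : ℕ, m ∣ qPart q k / q ∧ 1 ≤ l ∧ Nat.gcd l q = 1 ∧ d = q * m * l}) ∧
     (¬ q ∣ k →
      {d : ℕ | 1 ≤ d ∧ Nat.gcd (d / Nat.gcd d h) q = q ∧ Nat.gcd (d / Nat.gcd d k) q = 1}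
        = ∅)) := by
  have hq' := hq.ne'
  have hh' := hh.ne'
  have hk' := hk.ne'
  have swap : {d : ℕ | 1 ≤ d ∧ Nat.gcd (d / Nat.gcd d h) q = q ∧ Nat.gcd (d / Nat.gcd d k) q = 1}
      = {d : ℕ | 1 ≤ d ∧ Nat.gcd (d / Nat.gcd d k) q = 1 ∧ Nat.gcd (d / Nat.gcd d h) q = q} := by
    ext d; simp only [Set.mem_setOf_eq]; tauto
  refine ⟨part1 hq' hh' hk' hhk, part2 hq' hh' hk' hhk, part3 hq' hh' hk' hhk,
    fun hqk => ?_, fun hqk => ?_⟩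
  · rw [swap]; exact (part3 hq' hk' hh' hhk.symm).1 hqk
  · rw [swap]; exact (part3 hq' hk' hh' hhk.symm).2 hqk
end

section
/- Let χ be a primitive Dirichlet character mod q, let h, k be coprime positive integers, and let α, β, γ, δ, s be complex numbers such that none of the following quantities equals 1: p^{2−α+β−γ+δ} and p^{2+α−β+γ−δ} for any prime p | hk; χ̄(p) p^{−α−δ+2s}, χ̄(p) p^{β+γ−2s}, χ̄(p) p^{−α−δ−2s} and χ̄(p) p^{β+γ+2s} for any prime p | h with p∤q; and χ(p) p^{−β−γ+2s}, χ(p) p^{α+δ−2s}, χ(p) p^{−β−γ−2s} and χ(p) p^{α+δ+2s} for any prime p | k with p∤q (so all local factors below are defined). Then: (i) h^{α} k^{γ} (hk)^{−s} C_{11,α,β,γ,δ,h,k}(−s) = h^{−δ} k^{−β} (hk)^{s} C_{22,−γ,−δ,−α,−β,h,k}(s); (ii) h^{β} k^{δ} (hk)^{−s} C_{22,α,β,γ,δ,h,k}(−s) = h^{−γ} k^{−α} (hk)^{s} C_{11,−γ,−δ,−α,−β,h,k}(s). -/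
open Complex MeasureTheory Filter Topology

section AuxS11

private lemma cpow_ne_zero' {x : ℂ} (hx : x ≠ 0) (y : ℂ) : x ^ y ≠ 0 := by
  simp [Complex.cpow_eq_zero_iff, hx]

private lemma natCast_prod_cpow {ι : Type*} (s : Finset ι) (f : ι → ℕ) (c : ℂ) :
    ((∏ i ∈ s, f i : ℕ) : ℂ) ^ c = ∏ i ∈ s, ((f i : ℂ) ^ c) := by
  induction s using Finset.cons_induction with
  | empty => simp
  | cons a s ha ih =>
      rw [Finset.prod_cons, Nat.cast_mul, Complex.natCast_mul_natCast_cpow, ih, Finset.prod_cons]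

private lemma natCast_pow_cpow (p m : ℕ) (c : ℂ) :
    ((p ^ m : ℕ) : ℂ) ^ c = (p : ℂ) ^ ((m : ℂ) * c) := by
  rw [Complex.natCast_cpow_natCast_mul, Nat.cast_pow]

/-- The key local (per-prime) identity. -/
private lemma local_key (t x : ℂ) (ht : t ≠ 0) (m : ℕ) (α β γ δ s : ℂ) :
    t ^ ((m : ℂ) * (α + δ - 2 * s)) *
      (((1 - x ^ (m + 1) * t ^ (-(((m : ℂ) + 1) * (α + δ + 2 * -s))))
        - t ^ (-1 : ℂ) * ((x * t ^ (γ - δ) + t ^ (-β - δ - 2 * -s)) *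
            (1 - x ^ m * t ^ (-((m : ℂ) * (α + δ + 2 * -s)))))
        + t ^ (-2 : ℂ) * (x * t ^ (-β + γ - 2 * δ - 2 * -s)
            - x ^ m * t ^ (-((m : ℂ) * (α + δ + 2 * -s))) * t ^ (α - β + γ - δ))) /
        ((1 - x * t ^ (-α - δ - 2 * -s)) * (1 - t ^ (-2 + α - β + γ - δ))))
    = ((t ^ (-((m : ℂ) * (-δ + -α + 2 * s))) - x ^ (m + 1) * t ^ (-δ + -α + 2 * s))
        - t ^ (-1 : ℂ) * ((t ^ (-((m : ℂ) * (-δ + -α + 2 * s))) - x ^ m) *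
            (t ^ (-δ + -β + 2 * s) + x * t ^ (- -γ + -δ)))
        + t ^ (-2 : ℂ) * (t ^ (-((m : ℂ) * (-δ + -α + 2 * s))) * x * t ^ (- -γ + 2 * -δ + -β + 2 * s)
            - x ^ m * t ^ (- -γ + -δ - -α + -β))) /
        ((1 - x * t ^ (-δ + -α + 2 * s)) * (1 - t ^ (-2 - -γ + -δ - -α + -β))) := by
  have hA : t ^ (-(((m : ℂ) + 1) * (α + δ + 2 * -s)))
      = (t ^ ((m : ℂ) * (α + δ - 2 * s)))⁻¹ * (t ^ (α + δ - 2 * s))⁻¹ := by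
    rw [← Complex.cpow_neg, ← Complex.cpow_neg, ← Complex.cpow_add _ _ ht]
    congr 1; ring
  have hB : t ^ (-((m : ℂ) * (α + δ + 2 * -s))) = (t ^ ((m : ℂ) * (α + δ - 2 * s)))⁻¹ := by
    rw [← Complex.cpow_neg]; congr 1; ring
  have hB' : t ^ (-((m : ℂ) * (-δ + -α + 2 * s))) = t ^ ((m : ℂ) * (α + δ - 2 * s)) := by
    congr 1; ring
  have hC' : t ^ (-δ + -α + 2 * s) = (t ^ (α + δ - 2 * s))⁻¹ := by
    rw [← Complex.cpow_neg]; congr 1; ring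
  have hD : t ^ (-α - δ - 2 * -s) = (t ^ (α + δ - 2 * s))⁻¹ := by
    rw [← Complex.cpow_neg]; congr 1; ring
  have hG1 : t ^ (- -γ + -δ) = t ^ (γ - δ) := by congr 1; ring
  have hG2 : t ^ (-δ + -β + 2 * s) = t ^ (-β - δ - 2 * -s) := by congr 1; ring
  have hG3 : t ^ (- -γ + 2 * -δ + -β + 2 * s) = t ^ (-β + γ - 2 * δ - 2 * -s) := by
    congr 1; ring
  have hG4 : t ^ (- -γ + -δ - -α + -β) = t ^ (α - β + γ - δ) := by congr 1; ring
  have hG5 : t ^ (-2 - -γ + -δ - -α + -β) = t ^ (-2 + α - β + γ - δ) := by congr 1; ring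
  rw [hA, hB, hB', hC', hD, hG1, hG2, hG3, hG4, hG5]
  have hM : t ^ ((m : ℂ) * (α + δ - 2 * s)) ≠ 0 := cpow_ne_zero' ht _
  have hC : t ^ (α + δ - 2 * s) ≠ 0 := cpow_ne_zero' ht _
  rw [mul_div_assoc']
  congr 1
  field_simp
  ring

/-- The key lemma: global form of the local identity. -/
private lemma key_s11 {q : ℕ} (ψ : DirichletCharacter ℂ q) (α β γ δ s : ℂ) (n : ℕ)
    (hn : n ≠ 0) :
    (n : ℂ) ^ (α + δ - 2 * s) * C11h ψ α β γ δ n (-s)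
      = (qPart q n : ℂ) ^ (α + δ - 2 * s) * C22h ψ (-γ) (-δ) (-α) (-β) n s := by
  have hfac : ∏ p ∈ n.primeFactors, p ^ n.factorization p = n := by
    conv_rhs => rw [← Nat.factorization_prod_pow_eq_self hn]
    rw [Finsupp.prod, Nat.support_factorization]
  have hsplit : (n : ℂ) ^ (α + δ - 2 * s)
      = (qPart q n : ℂ) ^ (α + δ - 2 * s) *
        ∏ p ∈ n.primeFactors.filter (fun p => ¬ p ∣ q),
          (p : ℂ) ^ ((n.factorization p : ℂ) * (α + δ - 2 * s)) := by
    conv_lhs =>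
      rw [show (n : ℂ) = ((qPart q n *
          ∏ p ∈ n.primeFactors.filter (fun p => ¬ p ∣ q), p ^ n.factorization p : ℕ) : ℂ) by
        rw [qPart, Finset.prod_filter_mul_prod_filter_not, hfac]]
    rw [Nat.cast_mul, Complex.natCast_mul_natCast_cpow, natCast_prod_cpow]
    congr 1
    exact Finset.prod_congr rfl fun p _ => natCast_pow_cpow p _ _
  rw [hsplit, C11h, C22h, mul_assoc, ← Finset.prod_mul_distrib]
  congr 1
  refine Finset.prod_congr rfl fun p hp => ?_
  have hp' : p.Prime := Nat.prime_of_mem_primeFactors (Finset.mem_filter.mp hp).1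
  have ht : (p : ℂ) ≠ 0 := Nat.cast_ne_zero.mpr hp'.pos.ne'
  exact local_key (p : ℂ) (ψ (p : ZMod q)) ht (n.factorization p) α β γ δ s

end AuxS11

/-- the functional equations relating `C₁₁` and `C₂₂`
(Proposition 6 of the paper). -/
theorem statement_11 (q : ℕ) [NeZero q] (χ : DirichletCharacter ℂ q) (hχ : χ.IsPrimitive)
    (h k : ℕ) (hh : 0 < h) (hk : 0 < k) (hhk : Nat.Coprime h k)
    (α β γ δ s : ℂ)
    (h1 : ∀ p : ℕ, p.Prime → p ∣ h * k →
      (p : ℂ) ^ (2 - α + β - γ + δ) ≠ 1 ∧ (p : ℂ) ^ (2 + α - β + γ - δ) ≠ 1)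
    (h2 : ∀ p : ℕ, p.Prime → p ∣ h → ¬ p ∣ q →
      conjChar χ (p : ZMod q) * (p : ℂ) ^ (-α - δ + 2 * s) ≠ 1 ∧
      conjChar χ (p : ZMod q) * (p : ℂ) ^ (β + γ - 2 * s) ≠ 1 ∧
      conjChar χ (p : ZMod q) * (p : ℂ) ^ (-α - δ - 2 * s) ≠ 1 ∧
      conjChar χ (p : ZMod q) * (p : ℂ) ^ (β + γ + 2 * s) ≠ 1)
    (h3 : ∀ p : ℕ, p.Prime → p ∣ k → ¬ p ∣ q →
      χ (p : ZMod q) * (p : ℂ) ^ (-β - γ + 2 * s) ≠ 1 ∧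
      χ (p : ZMod q) * (p : ℂ) ^ (α + δ - 2 * s) ≠ 1 ∧
      χ (p : ZMod q) * (p : ℂ) ^ (-β - γ - 2 * s) ≠ 1 ∧
      χ (p : ZMod q) * (p : ℂ) ^ (α + δ + 2 * s) ≠ 1) :
    (h : ℂ) ^ α * (k : ℂ) ^ γ * ((h : ℂ) * (k : ℂ)) ^ (-s) * C11full χ α β γ δ h k (-s)
      = (h : ℂ) ^ (-δ) * (k : ℂ) ^ (-β) * ((h : ℂ) * (k : ℂ)) ^ s *
          C22full χ (-γ) (-δ) (-α) (-β) h k s ∧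
    (h : ℂ) ^ β * (k : ℂ) ^ δ * ((h : ℂ) * (k : ℂ)) ^ (-s) * C22full χ α β γ δ h k (-s)
      = (h : ℂ) ^ (-γ) * (k : ℂ) ^ (-α) * ((h : ℂ) * (k : ℂ)) ^ s *
          C11full χ (-γ) (-δ) (-α) (-β) h k s := by
  have hh0 : (h : ℂ) ≠ 0 := Nat.cast_ne_zero.mpr hh.ne'
  have hk0 : (k : ℂ) ≠ 0 := Nat.cast_ne_zero.mpr hk.ne'
  have hqh0 : ((qPart q h : ℕ) : ℂ) ≠ 0 := by
    have : 0 < qPart q h := Finset.prod_pos fun p hp =>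
      pow_pos (Nat.prime_of_mem_primeFactors (Finset.mem_filter.mp hp).1).pos _
    exact_mod_cast this.ne'
  have hqk0 : ((qPart q k : ℕ) : ℂ) ≠ 0 := by
    have : 0 < qPart q k := Finset.prod_pos fun p hp =>
      pow_pos (Nat.prime_of_mem_primeFactors (Finset.mem_filter.mp hp).1).pos _
    exact_mod_cast this.ne'
  have K1 := key_s11 (conjChar χ) α β γ δ s h hh.ne'
  have K2 := key_s11 χ γ δ α β s k hk.ne'
  have K3 := key_s11 (conjChar χ) (-γ) (-δ) (-α) (-β) (-s) h hh.ne'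
  have K4 := key_s11 χ (-α) (-β) (-γ) (-δ) (-s) k hk.ne'
  simp only [neg_neg] at K3 K4
  constructor
  · have e1 : C22h (conjChar χ) (-γ) (-δ) (-α) (-β) h s
        = (((qPart q h : ℕ) : ℂ) ^ (-(α + δ - 2 * s))) *
          ((h : ℂ) ^ (α + δ - 2 * s) * C11h (conjChar χ) α β γ δ h (-s)) := by
      rw [Complex.cpow_neg, K1, inv_mul_cancel_left₀ (cpow_ne_zero' hqh0 _)]
    have e2 : C22h χ (-α) (-β) (-γ) (-δ) k s
        = (((qPart q k : ℕ) : ℂ) ^ (-(γ + β - 2 * s))) *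
          ((k : ℂ) ^ (γ + β - 2 * s) * C11h χ γ δ α β k (-s)) := by
      rw [Complex.cpow_neg, K2, inv_mul_cancel_left₀ (cpow_ne_zero' hqk0 _)]
    rw [C11full, C22full, e1, e2,
      show (- -δ - -α - 2 * s : ℂ) = α + δ - 2 * s by ring,
      show (- -γ - -β - 2 * s : ℂ) = γ + β - 2 * s by ring,
      Complex.natCast_mul_natCast_cpow, Complex.natCast_mul_natCast_cpow]
    have hs1 : (h : ℂ) ^ α * (k : ℂ) ^ γ * (h : ℂ) ^ (-s) * (k : ℂ) ^ (-s)
        = (h : ℂ) ^ (-δ) * (k : ℂ) ^ (-β) * (h : ℂ) ^ s * (k : ℂ) ^ s *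
          (((qPart q h : ℕ) : ℂ) ^ (α + δ - 2 * s) * ((qPart q h : ℕ) : ℂ) ^ (-(α + δ - 2 * s))) *
          (((qPart q k : ℕ) : ℂ) ^ (γ + β - 2 * s) * ((qPart q k : ℕ) : ℂ) ^ (-(γ + β - 2 * s))) *
          (h : ℂ) ^ (α + δ - 2 * s) * (k : ℂ) ^ (γ + β - 2 * s) := by
      simp only [Complex.cpow_def_of_ne_zero hh0, Complex.cpow_def_of_ne_zero hk0,
        Complex.cpow_def_of_ne_zero hqh0, Complex.cpow_def_of_ne_zero hqk0, ← Complex.exp_add]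
      congr 1
      ring
    linear_combination (C11h (conjChar χ) α β γ δ h (-s) * C11h χ γ δ α β k (-s)) * hs1
  · have e3 : C22h (conjChar χ) α β γ δ h (-s)
        = (((qPart q h : ℕ) : ℂ) ^ (-(-γ + -β - 2 * -s))) *
          ((h : ℂ) ^ (-γ + -β - 2 * -s) * C11h (conjChar χ) (-γ) (-δ) (-α) (-β) h s) := by
      rw [Complex.cpow_neg, K3, inv_mul_cancel_left₀ (cpow_ne_zero' hqh0 _)]
    have e4 : C22h χ γ δ α β k (-s)
        = (((qPart q k : ℕ) : ℂ) ^ (-(-α + -δ - 2 * -s))) *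
          ((k : ℂ) ^ (-α + -δ - 2 * -s) * C11h χ (-α) (-β) (-γ) (-δ) k s) := by
      rw [Complex.cpow_neg, K4, inv_mul_cancel_left₀ (cpow_ne_zero' hqk0 _)]
    rw [C11full, C22full, e3, e4,
      show (-β - γ - 2 * -s : ℂ) = -γ + -β - 2 * -s by ring,
      show (-α - δ - 2 * -s : ℂ) = -α + -δ - 2 * -s by ring,
      Complex.natCast_mul_natCast_cpow, Complex.natCast_mul_natCast_cpow]
    have hs2 : (h : ℂ) ^ β * (k : ℂ) ^ δ * (h : ℂ) ^ (-s) * (k : ℂ) ^ (-s) *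
          (((qPart q h : ℕ) : ℂ) ^ (-γ + -β - 2 * -s) *
            ((qPart q h : ℕ) : ℂ) ^ (-(-γ + -β - 2 * -s))) *
          (((qPart q k : ℕ) : ℂ) ^ (-α + -δ - 2 * -s) *
            ((qPart q k : ℕ) : ℂ) ^ (-(-α + -δ - 2 * -s))) *
          (h : ℂ) ^ (-γ + -β - 2 * -s) * (k : ℂ) ^ (-α + -δ - 2 * -s)
        = (h : ℂ) ^ (-γ) * (k : ℂ) ^ (-α) * (h : ℂ) ^ s * (k : ℂ) ^ s := by
      simp only [Complex.cpow_def_of_ne_zero hh0, Complex.cpow_def_of_ne_zero hk0,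
        Complex.cpow_def_of_ne_zero hqh0, Complex.cpow_def_of_ne_zero hqk0, ← Complex.exp_add]
      congr 1
      ring
    linear_combination (C11h (conjChar χ) (-γ) (-δ) (-α) (-β) h s *
      C11h χ (-α) (-β) (-γ) (-δ) k s) * hs2
end

section
/- Let χ be a primitive Dirichlet character mod q, let h, k be coprime positive integers with q | h (hence gcd(k,q)=1), and let α, β, γ, δ, s be complex numbers such that none of the quantities p^{−α−γ+2s}, p^{−α−γ−2s}, χ(p)² p^{−2+α−β−γ+δ}, χ(p)² p^{−2−α+β+γ−δ} (for primes p | h, p∤q) and p^{−β−δ+2s}, p^{−β−δ−2s} (for primes p | k) equals 1, so that all local factors below are defined. Then q^{−α−δ+s} · (Σ_{m | h(q)/q} m^{−α−γ+2s}) · h^{α} k^{δ} (hk)^{−s} · C_{12,α,β,γ,δ,h,k}(−s) = q^{−δ+γ−s} · (Σ_{m | h(q)/q} m^{α+γ−2s}) · h^{−γ} k^{−β} (hk)^{s} · C_{12,−γ,−δ,−α,−β,h,k}(s). -/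
open Complex MeasureTheory Filter Topology

lemma nat_mul_cpow (a b : ℕ) (z : ℂ) :
    ((a * b : ℕ) : ℂ) ^ z = (a : ℂ) ^ z * (b : ℂ) ^ z := by
  have hmm := Complex.mul_cpow_ofReal_nonneg (a := (a:ℝ)) (b := (b:ℝ))
    (Nat.cast_nonneg a) (Nat.cast_nonneg b) z
  push_cast at hmm ⊢
  exact hmm

lemma natCast_mul_cpow (a b : ℕ) (z : ℂ) :
    ((a : ℂ) * (b : ℂ)) ^ z = (a : ℂ) ^ z * (b : ℂ) ^ z := by
  rw [show (a : ℂ) * (b : ℂ) = ((a * b : ℕ) : ℂ) by push_cast; ring, nat_mul_cpow]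

lemma cpow_prod {ι : Type*} (t : Finset ι) (f : ι → ℕ) (z : ℂ) :
    ((∏ i ∈ t, f i : ℕ) : ℂ) ^ z = ∏ i ∈ t, ((f i : ℕ) : ℂ) ^ z := by
  classical
  induction t using Finset.cons_induction with
  | empty => simp
  | cons a t ha ih => rw [Finset.prod_cons, nat_mul_cpow, ih, Finset.prod_cons]

lemma prime_pow_cpow {p : ℕ} (hp : p ≠ 0) (m : ℕ) (z : ℂ) :
    ((p ^ m : ℕ) : ℂ) ^ z = (p : ℂ) ^ ((m : ℂ) * z) := by
  have hpc : (p : ℂ) ≠ 0 := Nat.cast_ne_zero.mpr hp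
  induction m with
  | zero => simp
  | succ n ih =>
    rw [pow_succ, nat_mul_cpow, ih,
      show ((n + 1 : ℕ) : ℂ) * z = (n : ℂ) * z + z by push_cast; ring,
      Complex.cpow_add _ _ hpc]

lemma split_pow (q n : ℕ) (hn : n ≠ 0) (z : ℂ) :
    (n : ℂ) ^ z = (qPart q n : ℂ) ^ z *
      ∏ p ∈ n.primeFactors.filter (fun p => ¬ p ∣ q),
        (p : ℂ) ^ ((n.factorization p : ℂ) * z) := by
  have hfact : ∏ p ∈ n.primeFactors, p ^ n.factorization p = n := by
    rw [← Nat.support_factorization]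
    exact Nat.factorization_prod_pow_eq_self hn
  have h1 : (n : ℂ) ^ z = ∏ p ∈ n.primeFactors, ((p ^ n.factorization p : ℕ) : ℂ) ^ z := by
    conv_lhs => rw [← hfact]
    rw [cpow_prod]
  rw [h1, Finset.prod_congr rfl (fun p hp =>
    prime_pow_cpow (Nat.prime_of_mem_primeFactors hp).pos.ne' (n.factorization p) z),
    ← Finset.prod_filter_mul_prod_filter_not n.primeFactors (· ∣ q)]
  congr 1
  unfold qPart
  rw [cpow_prod]
  exact Finset.prod_congr rfl fun p hp =>
    (prime_pow_cpow (Nat.prime_of_mem_primeFactors (Finset.mem_filter.mp hp).1).pos.ne' _ z).symm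

lemma sum_flip (N : ℕ) (hN : N ≠ 0) (w : ℂ) :
    ∑ d ∈ N.divisors, (d : ℂ) ^ w = (N : ℂ) ^ w * ∑ d ∈ N.divisors, (d : ℂ) ^ (-w) := by
  rw [Finset.mul_sum, ← Nat.sum_div_divisors N (fun d => (d : ℂ) ^ w)]
  refine Finset.sum_congr rfl fun d hd => ?_
  have hdvd : d ∣ N := (Nat.mem_divisors.mp hd).1
  have hd0 : d ≠ 0 := by
    rintro rfl
    exact hN (Nat.eq_zero_of_zero_dvd hdvd)
  have hdC : (d : ℂ) ≠ 0 := Nat.cast_ne_zero.mpr hd0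
  have hmul : ((N / d * d : ℕ) : ℂ) = (N : ℂ) := by
    rw [Nat.div_mul_cancel hdvd]
  have hdw : (d : ℂ) ^ w ≠ 0 := by
    simp [Complex.cpow_eq_zero_iff, hdC]
  rw [show ((N : ℂ)) = ((N / d * d : ℕ) : ℂ) from hmul.symm, nat_mul_cpow, Complex.cpow_neg,
    mul_assoc, mul_inv_cancel₀ hdw, mul_one]



set_option maxHeartbeats 1000000 in
lemma abstract_id (W Y V T A B D G i1 i2 c Z : ℂ) (hY : Y ≠ 0) (hV : V ≠ 0) (hT : T ≠ 0)
    (hTm1 : 1 - T⁻¹ ≠ 0) (hT1 : 1 - T ≠ 0) :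
    W * Y * (V * V) * V⁻¹ *
      ((1 - (Y * T)⁻¹ - i1 * (c * (A + B) * (1 - Y⁻¹)) +
          i2 * (c ^ 2 * D * (G - G * T * T * (Y * T)⁻¹))) /
        ((1 - T⁻¹) * (1 - c ^ 2 * Z)))
    = W * V *
      ((1 - Y * T - i1 * (c * (B * T + A * T) * (1 - Y)) +
          i2 * (c ^ 2 * D * (G * T * T - G * (Y * T)))) /
        ((1 - T) * (1 - c ^ 2 * Z))) := by
  have hYT : Y * T ≠ 0 := mul_ne_zero hY hT
  have c1 : W * Y * (V * V) * V⁻¹ = W * Y * V := by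
    field_simp
  have c2 : (1 - (Y * T)⁻¹ - i1 * (c * (A + B) * (1 - Y⁻¹)) +
          i2 * (c ^ 2 * D * (G - G * T * T * (Y * T)⁻¹))) /
        ((1 - T⁻¹) * (1 - c ^ 2 * Z))
      = (Y * T - 1 - i1 * (c * (A + B) * (Y * T - T)) +
          i2 * (c ^ 2 * D * (G * (Y * T) - G * T * T))) /
        ((Y * T - Y) * (1 - c ^ 2 * Z)) := by
    rw [← mul_div_mul_left _ _ hYT]
    congr 1
    · field_simp
    · field_simp
  rw [c1, c2]
  have hd : Y * T - Y ≠ 0 := by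
    rw [show Y * T - Y = -(Y * (1 - T)) by ring]
    exact neg_ne_zero.mpr (mul_ne_zero hY hT1)
  rcases eq_or_ne (1 - c ^ 2 * Z) 0 with hy | hy
  · rw [hy]
    simp only [mul_zero, div_zero]
  · rw [← mul_div_assoc, ← mul_div_assoc,
      div_eq_div_iff (mul_ne_zero hd hy) (mul_ne_zero hT1 hy)]
    ring

set_option maxHeartbeats 2000000 in
lemma local_id (p : ℕ) (hp : p.Prime) (c : ℂ) (m : ℕ) (α β γ δ s : ℂ)
    (hX : (p : ℂ) ^ (-α - γ + 2 * s) ≠ 1) :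
    (p : ℂ) ^ ((m : ℂ) * α) * (p : ℂ) ^ ((m : ℂ) * -s) *
      (((1 - (p : ℂ) ^ (-(((m : ℂ) + 1) * (α + γ + 2 * -s))))
        - (p : ℂ) ^ (-1 : ℂ) *
          (c * ((p : ℂ) ^ (δ - γ) + (p : ℂ) ^ (-β - γ - 2 * -s)) *
            (1 - (p : ℂ) ^ (-((m : ℂ) * (α + γ + 2 * -s)))))
        + (p : ℂ) ^ (-2 : ℂ) *
          (c ^ 2 * (p : ℂ) ^ (δ - β) *
            ((p : ℂ) ^ (-(2 * (γ + -s))) -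
              (p : ℂ) ^ (2 * (α + -s)) * (p : ℂ) ^ (-(((m : ℂ) + 1) * (α + γ + 2 * -s)))))) /
       ((1 - (p : ℂ) ^ (-α - γ - 2 * -s)) * (1 - c ^ 2 * (p : ℂ) ^ (-2 + α - β - γ + δ))))
    = (p : ℂ) ^ ((m : ℂ) * -γ) * (p : ℂ) ^ ((m : ℂ) * s) *
      (((1 - (p : ℂ) ^ (-(((m : ℂ) + 1) * (-γ + -α + 2 * s))))
        - (p : ℂ) ^ (-1 : ℂ) *
          (c * ((p : ℂ) ^ (-β - -α) + (p : ℂ) ^ (- -δ - -α - 2 * s)) *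
            (1 - (p : ℂ) ^ (-((m : ℂ) * (-γ + -α + 2 * s)))))
        + (p : ℂ) ^ (-2 : ℂ) *
          (c ^ 2 * (p : ℂ) ^ (-β - -δ) *
            ((p : ℂ) ^ (-(2 * (-α + s))) -
              (p : ℂ) ^ (2 * (-γ + s)) * (p : ℂ) ^ (-(((m : ℂ) + 1) * (-γ + -α + 2 * s)))))) /
       ((1 - (p : ℂ) ^ (- -γ - -α - 2 * s)) * (1 - c ^ 2 * (p : ℂ) ^ (-2 + -γ - -δ - -α + -β)))) := by
  have hP : (p : ℂ) ≠ 0 := Nat.cast_ne_zero.mpr hp.pos.ne'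
  have cadd : ∀ x y : ℂ, (p : ℂ) ^ (x + y) = (p : ℂ) ^ x * (p : ℂ) ^ y :=
    fun x y => Complex.cpow_add x y hP
  have cne : ∀ x : ℂ, (p : ℂ) ^ x ≠ 0 := fun x => by
    simp [Complex.cpow_eq_zero_iff, hP]
  have e1 : (p : ℂ) ^ (-(((m : ℂ) + 1) * (α + γ + 2 * -s)))
      = ((p : ℂ) ^ ((m : ℂ) * (α + γ - 2 * s)) * (p : ℂ) ^ (α + γ - 2 * s))⁻¹ := by
    rw [← cadd, ← Complex.cpow_neg]; congr 1; ring
  have e2 : (p : ℂ) ^ (-((m : ℂ) * (α + γ + 2 * -s)))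
      = ((p : ℂ) ^ ((m : ℂ) * (α + γ - 2 * s)))⁻¹ := by
    rw [← Complex.cpow_neg]; congr 1; ring
  have e3 : (p : ℂ) ^ (2 * (α + -s))
      = (p : ℂ) ^ (-(2 * (γ + -s))) * (p : ℂ) ^ (α + γ - 2 * s) * (p : ℂ) ^ (α + γ - 2 * s) := by
    rw [← cadd, ← cadd]; congr 1; ring
  have e4 : (p : ℂ) ^ (-α - γ - 2 * -s) = ((p : ℂ) ^ (α + γ - 2 * s))⁻¹ := by
    rw [← Complex.cpow_neg]; congr 1; ring
  have f1 : (p : ℂ) ^ (-(((m : ℂ) + 1) * (-γ + -α + 2 * s)))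
      = (p : ℂ) ^ ((m : ℂ) * (α + γ - 2 * s)) * (p : ℂ) ^ (α + γ - 2 * s) := by
    rw [← cadd]; congr 1; ring
  have f2 : (p : ℂ) ^ (-((m : ℂ) * (-γ + -α + 2 * s)))
      = (p : ℂ) ^ ((m : ℂ) * (α + γ - 2 * s)) := by
    congr 1; ring
  have f3 : (p : ℂ) ^ (-β - -α) = (p : ℂ) ^ (-β - γ - 2 * -s) * (p : ℂ) ^ (α + γ - 2 * s) := by
    rw [← cadd]; congr 1; ring
  have f4 : (p : ℂ) ^ (- -δ - -α - 2 * s) = (p : ℂ) ^ (δ - γ) * (p : ℂ) ^ (α + γ - 2 * s) := by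
    rw [← cadd]; congr 1; ring
  have f5 : (p : ℂ) ^ (-β - -δ) = (p : ℂ) ^ (δ - β) := by
    congr 1; ring
  have f6 : (p : ℂ) ^ (-(2 * (-α + s)))
      = (p : ℂ) ^ (-(2 * (γ + -s))) * (p : ℂ) ^ (α + γ - 2 * s) * (p : ℂ) ^ (α + γ - 2 * s) := by
    rw [← cadd, ← cadd]; congr 1; ring
  have f7 : (p : ℂ) ^ (2 * (-γ + s)) = (p : ℂ) ^ (-(2 * (γ + -s))) := by
    congr 1; ring
  have f8 : (p : ℂ) ^ (- -γ - -α - 2 * s) = (p : ℂ) ^ (α + γ - 2 * s) := by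
    congr 1; ring
  have f9 : (p : ℂ) ^ (-2 + -γ - -δ - -α + -β) = (p : ℂ) ^ (-2 + α - β - γ + δ) := by
    congr 1; ring
  have g1 : (p : ℂ) ^ ((m : ℂ) * α)
      = (p : ℂ) ^ ((m : ℂ) * -γ) * (p : ℂ) ^ ((m : ℂ) * (α + γ - 2 * s)) *
        ((p : ℂ) ^ ((m : ℂ) * s) * (p : ℂ) ^ ((m : ℂ) * s)) := by
    rw [← cadd, ← cadd, ← cadd]; congr 1; ring
  have g2 : (p : ℂ) ^ ((m : ℂ) * -s) = ((p : ℂ) ^ ((m : ℂ) * s))⁻¹ := by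
    rw [← Complex.cpow_neg]; congr 1; ring
  rw [e1, e2, e3, e4, f1, f2, f3, f4, f5, f6, f7, f8, f9, g1, g2]
  have hT : (p : ℂ) ^ (α + γ - 2 * s) ≠ 0 := cne _
  have hY : (p : ℂ) ^ ((m : ℂ) * (α + γ - 2 * s)) ≠ 0 := cne _
  have hV : (p : ℂ) ^ ((m : ℂ) * s) ≠ 0 := cne _
  have hXinv : ((p : ℂ) ^ (α + γ - 2 * s))⁻¹ ≠ 1 := by
    rw [← Complex.cpow_neg, show -(α + γ - 2 * s) = -α - γ + 2 * s by ring]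
    exact hX
  have hTm1 : (1 : ℂ) - ((p : ℂ) ^ (α + γ - 2 * s))⁻¹ ≠ 0 :=
    sub_ne_zero.mpr (Ne.symm hXinv)
  have hT1 : (1 : ℂ) - (p : ℂ) ^ (α + γ - 2 * s) ≠ 0 := by
    rw [sub_ne_zero]
    intro hEq
    exact hXinv (by rw [← hEq, inv_one])
  exact abstract_id _ _ _ _ _ _ _ _ _ _ _ _ hY hV hT hTm1 hT1

set_option maxHeartbeats 4000000 in
/-- the functional equation for `C₁₂` (Proposition 9 of the paper). -/
theorem statement_12 (q : ℕ) [NeZero q] (χ : DirichletCharacter ℂ q) (hχ : χ.IsPrimitive)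
    (h k : ℕ) (hh : 0 < h) (hk : 0 < k) (hhk : Nat.Coprime h k) (hqh : q ∣ h)
    (α β γ δ s : ℂ)
    (h1 : ∀ p : ℕ, p.Prime → p ∣ h → ¬ p ∣ q →
      (p : ℂ) ^ (-α - γ + 2 * s) ≠ 1 ∧ (p : ℂ) ^ (-α - γ - 2 * s) ≠ 1 ∧
      χ (p : ZMod q) ^ 2 * (p : ℂ) ^ (-2 + α - β - γ + δ) ≠ 1 ∧
      χ (p : ZMod q) ^ 2 * (p : ℂ) ^ (-2 - α + β + γ - δ) ≠ 1)
    (h2 : ∀ p : ℕ, p.Prime → p ∣ k →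
      (p : ℂ) ^ (-β - δ + 2 * s) ≠ 1 ∧ (p : ℂ) ^ (-β - δ - 2 * s) ≠ 1) :
    (q : ℂ) ^ (-α - δ + s) * (∑ m ∈ (qPart q h / q).divisors, (m : ℂ) ^ (-α - γ + 2 * s)) *
        (h : ℂ) ^ α * (k : ℂ) ^ δ * ((h : ℂ) * (k : ℂ)) ^ (-s) * C12full χ α β γ δ h k (-s)
      = (q : ℂ) ^ (-δ + γ - s) * (∑ m ∈ (qPart q h / q).divisors, (m : ℂ) ^ (α + γ - 2 * s)) *
          (h : ℂ) ^ (-γ) * (k : ℂ) ^ (-β) * ((h : ℂ) * (k : ℂ)) ^ s *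
          C12full χ (-γ) (-δ) (-α) (-β) h k s := by
  classical
  have hq0 : q ≠ 0 := NeZero.ne q
  have hh0 : h ≠ 0 := hh.ne'
  have hk0 : k ≠ 0 := hk.ne'
  have hknotq : ∀ p : ℕ, p ∈ k.primeFactors → ¬ p ∣ q := by
    intro p hpk hpq
    have hpp := Nat.prime_of_mem_primeFactors hpk
    have : p ∣ Nat.gcd h k :=
      Nat.dvd_gcd (hpq.trans hqh) (Nat.dvd_of_mem_primeFactors hpk)
    rw [Nat.Coprime.gcd_eq_one hhk] at this
    exact Nat.lt_irrefl 1 (lt_of_lt_of_le hpp.one_lt (Nat.le_of_dvd one_pos this))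
  have hQk : qPart q k = 1 := by
    unfold qPart
    rw [Finset.filter_eq_empty_iff.mpr (fun {p} hp => hknotq p hp), Finset.prod_empty]
  have hqdvd : q ∣ qPart q h := by
    have hsub : q.primeFactors ⊆ h.primeFactors.filter (· ∣ q) := by
      intro p hp
      rw [Nat.mem_primeFactors] at hp
      rw [Finset.mem_filter, Nat.mem_primeFactors]
      exact ⟨⟨hp.1, hp.2.1.trans hqh, hh0⟩, hp.2.1⟩
    have hle : q.factorization ≤ h.factorization :=
      (Nat.factorization_le_iff_dvd hq0 hh0).mpr hqh
    calc q = ∏ p ∈ q.primeFactors, p ^ q.factorization p := by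
              rw [← Nat.support_factorization]
              exact (Nat.factorization_prod_pow_eq_self hq0).symm
      _ = ∏ p ∈ h.primeFactors.filter (· ∣ q), p ^ q.factorization p := by
            refine Finset.prod_subset hsub fun p _ hnp => ?_
            rw [← Nat.support_factorization] at hnp
            rw [Finsupp.notMem_support_iff.mp hnp, pow_zero]
      _ ∣ qPart q h := by
            unfold qPart
            exact Finset.prod_dvd_prod_of_dvd _ _
              (fun p _ => pow_dvd_pow p (hle p))
  have hQh0 : qPart q h ≠ 0 := by
    unfold qPart
    refine Finset.prod_ne_zero_iff.mpr fun p hp => ?_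
    exact pow_ne_zero _ (Nat.prime_of_mem_primeFactors (Finset.mem_filter.mp hp).1).pos.ne'
  have hNd : qPart q h = q * (qPart q h / q) := (Nat.mul_div_cancel' hqdvd).symm
  have hN0 : qPart q h / q ≠ 0 := fun h0 => hQh0 (by rw [hNd, h0, mul_zero])
  have hqC : (q : ℂ) ≠ 0 := Nat.cast_ne_zero.mpr hq0
  have hNC : ((qPart q h / q : ℕ) : ℂ) ≠ 0 := Nat.cast_ne_zero.mpr hN0
  have hflip : (∑ m ∈ (qPart q h / q).divisors, (m : ℂ) ^ (-α - γ + 2 * s))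
      = ((qPart q h / q : ℕ) : ℂ) ^ (-α - γ + 2 * s) *
        ∑ m ∈ (qPart q h / q).divisors, (m : ℂ) ^ (α + γ - 2 * s) := by
    rw [sum_flip _ hN0 (-α - γ + 2 * s)]
    congr 1
    refine Finset.sum_congr rfl fun d _ => ?_
    congr 1
    ring
  have hcast : ((qPart q h : ℕ) : ℂ) = (q : ℂ) * ((qPart q h / q : ℕ) : ℂ) := by
    conv_lhs => rw [hNd]
    push_cast
    ring
  have mq : (q : ℂ) ^ (-α - δ + s) * (q : ℂ) ^ α * (q : ℂ) ^ (-s)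
      = (q : ℂ) ^ (-δ + γ - s) * (q : ℂ) ^ (-γ) * (q : ℂ) ^ s := by
    rw [← Complex.cpow_add _ _ hqC, ← Complex.cpow_add _ _ hqC, ← Complex.cpow_add _ _ hqC,
      ← Complex.cpow_add _ _ hqC]
    congr 1
    ring
  have mN : ((qPart q h / q : ℕ) : ℂ) ^ (-α - γ + 2 * s) * ((qPart q h / q : ℕ) : ℂ) ^ α *
        ((qPart q h / q : ℕ) : ℂ) ^ (-s)
      = ((qPart q h / q : ℕ) : ℂ) ^ (-γ) * ((qPart q h / q : ℕ) : ℂ) ^ s := by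
    rw [← Complex.cpow_add _ _ hNC, ← Complex.cpow_add _ _ hNC, ← Complex.cpow_add _ _ hNC]
    congr 1
    ring
  have HQ : (q : ℂ) ^ (-α - δ + s) * (∑ m ∈ (qPart q h / q).divisors, (m : ℂ) ^ (-α - γ + 2 * s)) *
        (qPart q h : ℂ) ^ α * (qPart q h : ℂ) ^ (-s)
      = (q : ℂ) ^ (-δ + γ - s) * (∑ m ∈ (qPart q h / q).divisors, (m : ℂ) ^ (α + γ - 2 * s)) *
        (qPart q h : ℂ) ^ (-γ) * (qPart q h : ℂ) ^ s := by
    rw [hflip, hcast, natCast_mul_cpow, natCast_mul_cpow, natCast_mul_cpow, natCast_mul_cpow]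
    calc (q : ℂ) ^ (-α - δ + s) *
          (((qPart q h / q : ℕ) : ℂ) ^ (-α - γ + 2 * s) *
            ∑ m ∈ (qPart q h / q).divisors, (m : ℂ) ^ (α + γ - 2 * s)) *
          ((q : ℂ) ^ α * ((qPart q h / q : ℕ) : ℂ) ^ α) *
          ((q : ℂ) ^ (-s) * ((qPart q h / q : ℕ) : ℂ) ^ (-s))
        = (∑ m ∈ (qPart q h / q).divisors, (m : ℂ) ^ (α + γ - 2 * s)) *
            ((q : ℂ) ^ (-α - δ + s) * (q : ℂ) ^ α * (q : ℂ) ^ (-s)) *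
            (((qPart q h / q : ℕ) : ℂ) ^ (-α - γ + 2 * s) * ((qPart q h / q : ℕ) : ℂ) ^ α *
              ((qPart q h / q : ℕ) : ℂ) ^ (-s)) := by ring
      _ = (∑ m ∈ (qPart q h / q).divisors, (m : ℂ) ^ (α + γ - 2 * s)) *
            ((q : ℂ) ^ (-δ + γ - s) * (q : ℂ) ^ (-γ) * (q : ℂ) ^ s) *
            (((qPart q h / q : ℕ) : ℂ) ^ (-γ) * ((qPart q h / q : ℕ) : ℂ) ^ s) := by
          rw [mq, mN]
      _ = (q : ℂ) ^ (-δ + γ - s) *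
            (∑ m ∈ (qPart q h / q).divisors, (m : ℂ) ^ (α + γ - 2 * s)) *
            ((q : ℂ) ^ (-γ) * ((qPart q h / q : ℕ) : ℂ) ^ (-γ)) *
            ((q : ℂ) ^ s * ((qPart q h / q : ℕ) : ℂ) ^ s) := by ring
  have Hh : (∏ p ∈ h.primeFactors.filter (fun p => ¬ p ∣ q),
          (p : ℂ) ^ ((h.factorization p : ℂ) * α)) *
        (∏ p ∈ h.primeFactors.filter (fun p => ¬ p ∣ q),
          (p : ℂ) ^ ((h.factorization p : ℂ) * -s)) *
        C12h χ α β γ δ h (-s)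
      = (∏ p ∈ h.primeFactors.filter (fun p => ¬ p ∣ q),
          (p : ℂ) ^ ((h.factorization p : ℂ) * -γ)) *
        (∏ p ∈ h.primeFactors.filter (fun p => ¬ p ∣ q),
          (p : ℂ) ^ ((h.factorization p : ℂ) * s)) *
        C12h χ (-γ) (-δ) (-α) (-β) h s := by
    simp only [C12h]
    rw [← Finset.prod_mul_distrib, ← Finset.prod_mul_distrib, ← Finset.prod_mul_distrib,
      ← Finset.prod_mul_distrib]
    refine Finset.prod_congr rfl fun p hp => ?_
    rw [Finset.mem_filter] at hp
    have pp := Nat.prime_of_mem_primeFactors hp.1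
    exact local_id p pp (χ (p : ZMod q)) (h.factorization p) α β γ δ s
      (h1 p pp (Nat.dvd_of_mem_primeFactors hp.1) hp.2).1
  have Hk : (∏ p ∈ k.primeFactors.filter (fun p => ¬ p ∣ q),
          (p : ℂ) ^ ((k.factorization p : ℂ) * δ)) *
        (∏ p ∈ k.primeFactors.filter (fun p => ¬ p ∣ q),
          (p : ℂ) ^ ((k.factorization p : ℂ) * -s)) *
        C12h χ δ γ β α k (-s)
      = (∏ p ∈ k.primeFactors.filter (fun p => ¬ p ∣ q),
          (p : ℂ) ^ ((k.factorization p : ℂ) * -β)) *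
        (∏ p ∈ k.primeFactors.filter (fun p => ¬ p ∣ q),
          (p : ℂ) ^ ((k.factorization p : ℂ) * s)) *
        C12h χ (-β) (-α) (-δ) (-γ) k s := by
    simp only [C12h]
    rw [← Finset.prod_mul_distrib, ← Finset.prod_mul_distrib, ← Finset.prod_mul_distrib,
      ← Finset.prod_mul_distrib]
    refine Finset.prod_congr rfl fun p hp => ?_
    rw [Finset.mem_filter] at hp
    have pp := Nat.prime_of_mem_primeFactors hp.1
    have hX : (p : ℂ) ^ (-δ - β + 2 * s) ≠ 1 := by
      rw [show -δ - β + 2 * s = -β - δ + 2 * s by ring]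
      exact (h2 p pp (Nat.dvd_of_mem_primeFactors hp.1)).1
    exact local_id p pp (χ (p : ZMod q)) (k.factorization p) δ γ β α s hX
  simp only [C12full]
  rw [show ((h : ℂ) * (k : ℂ)) ^ (-s) = (h : ℂ) ^ (-s) * (k : ℂ) ^ (-s) from
      natCast_mul_cpow h k (-s),
    show ((h : ℂ) * (k : ℂ)) ^ s = (h : ℂ) ^ s * (k : ℂ) ^ s from natCast_mul_cpow h k s,
    split_pow q h hh0 α, split_pow q h hh0 (-s), split_pow q h hh0 (-γ), split_pow q h hh0 s,
    split_pow q k hk0 δ, split_pow q k hk0 (-s), split_pow q k hk0 (-β), split_pow q k hk0 s,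
    hQk]
  simp only [Nat.cast_one, Complex.one_cpow, one_mul]
  calc (q : ℂ) ^ (-α - δ + s) * (∑ m ∈ (qPart q h / q).divisors, (m : ℂ) ^ (-α - γ + 2 * s)) *
        ((qPart q h : ℂ) ^ α *
          ∏ p ∈ h.primeFactors.filter (fun p => ¬ p ∣ q),
            (p : ℂ) ^ ((h.factorization p : ℂ) * α)) *
        (∏ p ∈ k.primeFactors.filter (fun p => ¬ p ∣ q),
            (p : ℂ) ^ ((k.factorization p : ℂ) * δ)) *
        (((qPart q h : ℂ) ^ (-s) *
            ∏ p ∈ h.primeFactors.filter (fun p => ¬ p ∣ q),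
              (p : ℂ) ^ ((h.factorization p : ℂ) * -s)) *
          ∏ p ∈ k.primeFactors.filter (fun p => ¬ p ∣ q),
            (p : ℂ) ^ ((k.factorization p : ℂ) * -s)) *
        (C12h χ α β γ δ h (-s) * C12h χ δ γ β α k (-s))
      = ((q : ℂ) ^ (-α - δ + s) *
          (∑ m ∈ (qPart q h / q).divisors, (m : ℂ) ^ (-α - γ + 2 * s)) *
          (qPart q h : ℂ) ^ α * (qPart q h : ℂ) ^ (-s)) *
        ((∏ p ∈ h.primeFactors.filter (fun p => ¬ p ∣ q),
            (p : ℂ) ^ ((h.factorization p : ℂ) * α)) *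
          (∏ p ∈ h.primeFactors.filter (fun p => ¬ p ∣ q),
            (p : ℂ) ^ ((h.factorization p : ℂ) * -s)) *
          C12h χ α β γ δ h (-s)) *
        ((∏ p ∈ k.primeFactors.filter (fun p => ¬ p ∣ q),
            (p : ℂ) ^ ((k.factorization p : ℂ) * δ)) *
          (∏ p ∈ k.primeFactors.filter (fun p => ¬ p ∣ q),
            (p : ℂ) ^ ((k.factorization p : ℂ) * -s)) *
          C12h χ δ γ β α k (-s)) := by ring
    _ = ((q : ℂ) ^ (-δ + γ - s) *
          (∑ m ∈ (qPart q h / q).divisors, (m : ℂ) ^ (α + γ - 2 * s)) *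
          (qPart q h : ℂ) ^ (-γ) * (qPart q h : ℂ) ^ s) *
        ((∏ p ∈ h.primeFactors.filter (fun p => ¬ p ∣ q),
            (p : ℂ) ^ ((h.factorization p : ℂ) * -γ)) *
          (∏ p ∈ h.primeFactors.filter (fun p => ¬ p ∣ q),
            (p : ℂ) ^ ((h.factorization p : ℂ) * s)) *
          C12h χ (-γ) (-δ) (-α) (-β) h s) *
        ((∏ p ∈ k.primeFactors.filter (fun p => ¬ p ∣ q),
            (p : ℂ) ^ ((k.factorization p : ℂ) * -β)) *
          (∏ p ∈ k.primeFactors.filter (fun p => ¬ p ∣ q),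
            (p : ℂ) ^ ((k.factorization p : ℂ) * s)) *
          C12h χ (-β) (-α) (-δ) (-γ) k s) := by rw [HQ, Hh, Hk]
    _ = (q : ℂ) ^ (-δ + γ - s) * (∑ m ∈ (qPart q h / q).divisors, (m : ℂ) ^ (α + γ - 2 * s)) *
        ((qPart q h : ℂ) ^ (-γ) *
          ∏ p ∈ h.primeFactors.filter (fun p => ¬ p ∣ q),
            (p : ℂ) ^ ((h.factorization p : ℂ) * -γ)) *
        (∏ p ∈ k.primeFactors.filter (fun p => ¬ p ∣ q),
            (p : ℂ) ^ ((k.factorization p : ℂ) * -β)) *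
        (((qPart q h : ℂ) ^ s *
            ∏ p ∈ h.primeFactors.filter (fun p => ¬ p ∣ q),
              (p : ℂ) ^ ((h.factorization p : ℂ) * s)) *
          ∏ p ∈ k.primeFactors.filter (fun p => ¬ p ∣ q),
            (p : ℂ) ^ ((k.factorization p : ℂ) * s)) *
        (C12h χ (-γ) (-δ) (-α) (-β) h s * C12h χ (-β) (-α) (-δ) (-γ) k s) := by ring
end

section
/- Let χ be a primitive Dirichlet character mod q, let d be a positive integer with q | d, and let r be a positive integer. Then Σ_{1≤c≤d, gcd(c,d)=1} χ(c) e_d(−cr) = conj(G(χ̄)) · Σ_{n | gcd(r, d/q)} μ((d/q)/n) χ((d/q)/n) χ̄(r/n) n, where conj denotes complex conjugation and μ is the Möbius function. -/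
open Complex MeasureTheory Filter Topology

section helpers13

open Finset

private lemma eC_eq_stdAddChar {N : ℕ} [NeZero N] (c : ℤ) :
    eC N c = ZMod.stdAddChar (N := N) (c : ZMod N) := (ZMod.stdAddChar_coe c).symm

private lemma sum_range_eq_sum_zmod {N : ℕ} [NeZero N] (F : ZMod N → ℂ) :
    ∑ c ∈ Finset.range N, F (c : ZMod N) = ∑ x : ZMod N, F x := by
  refine Finset.sum_nbij' (fun c => (c : ZMod N)) (fun x => x.val) ?_ ?_ ?_ ?_ ?_
  · intro a _; exact Finset.mem_univ _
  · intro x _; exact Finset.mem_range.mpr (ZMod.val_lt x)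
  · intro a ha; exact ZMod.val_natCast_of_lt (Finset.mem_range.mp ha)
  · intro x _; exact ZMod.natCast_zmod_val x
  · intro a _; rfl

private lemma conj_eC {N : ℕ} (c : ℤ) : (starRingEnd ℂ) (eC N c) = eC N (-c) := by
  rw [eC, eC, ← Complex.exp_conj]
  congr 1
  simp only [map_div₀, map_mul, Complex.conj_I, map_ofNat, Complex.conj_ofReal,
    map_intCast, map_natCast]
  push_cast
  ring

private lemma eC_mul_left {d e : ℕ} (he : e ∣ d) (he0 : 0 < e) (x : ℤ) :
    eC d (e * x) = eC (d / e) x := by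
  obtain ⟨k, rfl⟩ := he
  rw [Nat.mul_div_cancel_left _ he0]
  unfold eC
  congr 1
  push_cast
  rw [show 2 * (Real.pi : ℂ) * Complex.I * ((e : ℂ) * (x : ℂ)) =
    (e : ℂ) * (2 * (Real.pi : ℂ) * Complex.I * (x : ℂ)) by ring,
    show ((e : ℂ) * (k : ℂ)) = (e : ℂ) * (k : ℂ) from rfl,
    mul_div_mul_left _ _ (by exact_mod_cast he0.ne' : (e : ℂ) ≠ 0)]

private lemma sum_eC_geom (t : ℕ) [NeZero t] (r : ℕ) :
    ∑ b ∈ Finset.range t, eC t (-((b : ℤ) * r)) = if t ∣ r then (t : ℂ) else 0 := by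
  have h : ∀ b : ℕ, eC t (-((b : ℤ) * r)) =
      ZMod.stdAddChar ((b : ZMod t) * (-(r : ZMod t))) := by
    intro b
    rw [eC_eq_stdAddChar]
    congr 1
    push_cast
    ring
  simp_rw [h]
  rw [sum_range_eq_sum_zmod (fun x => ZMod.stdAddChar (x * (-(r : ZMod t))))]
  rw [AddChar.sum_mulShift _ (ZMod.isPrimitive_stdAddChar t)]
  have : (-(r : ZMod t) = 0) ↔ t ∣ r := by
    rw [neg_eq_zero, ZMod.natCast_eq_zero_iff]
  split_ifs with h1 h2 h2
  · simp [ZMod.card]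
  · exact absurd (this.mp h1) h2
  · exact absurd (this.mpr h2) h1
  · exact Nat.cast_zero

variable {q : ℕ} [NeZero q]

private lemma conjChar_apply (χ : DirichletCharacter ℂ q) (x : ZMod q) :
    conjChar χ x = (starRingEnd ℂ) (χ x) := rfl

private lemma conjChar_eq_inv (χ : DirichletCharacter ℂ q) (x : ZMod q) :
    conjChar χ x = χ⁻¹ x := by
  rw [conjChar_apply]
  exact MulChar.star_apply' χ x

private lemma sum_Icc_eq_range {N : ℕ} (f : ℕ → ℂ) (h : f N = f 0) :
    ∑ c ∈ Finset.Icc 1 N, f c = ∑ c ∈ Finset.range N, f c := by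
  have h1 : Finset.range (N + 1) = insert 0 (Finset.Icc 1 N) := by
    ext c
    simp only [Finset.mem_range, Finset.mem_insert, Finset.mem_Icc]
    omega
  have h2 := Finset.sum_range_succ f N
  rw [h1, Finset.sum_insert (by simp)] at h2
  linear_combination h2 + h

private lemma sum_range_mul' (f : ℕ → ℂ) (a t : ℕ) :
    ∑ c ∈ Finset.range (a * t), f c
      = ∑ b ∈ Finset.range t, ∑ i ∈ Finset.range a, f (i + a * b) := by
  induction t with
  | zero => simp
  | succ t ih =>
      rw [Nat.mul_succ, Finset.sum_range_add, ih, Finset.sum_range_succ]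
      congr 1
      exact Finset.sum_congr rfl fun i _ => by rw [Nat.add_comm]

private lemma gauss_key (χ : DirichletCharacter ℂ q) (hχ : χ.IsPrimitive) (s : ℕ) :
    ∑ a ∈ Finset.range q, χ (a : ZMod q) * eC q (-((a : ℤ) * s)) =
      (starRingEnd ℂ) (gaussC (conjChar χ)) * conjChar χ ((s : ℕ) : ZMod q) := by
  have key : ∀ s' : ZMod q,
      ∑ a ∈ Finset.range q, χ (a : ZMod q) * ZMod.stdAddChar ((a : ZMod q) * s')
        = χ⁻¹ s' * gaussSum χ (ZMod.stdAddChar) := by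
    intro s'
    rw [sum_range_eq_sum_zmod (fun x => χ x * ZMod.stdAddChar (x * s')),
      ← gaussSum_mulShift_of_isPrimitive _ hχ s']
    unfold gaussSum
    exact Finset.sum_congr rfl fun x _ => by rw [AddChar.mulShift_apply, mul_comm s' x]
  have lhs_eq : ∑ a ∈ Finset.range q, χ (a : ZMod q) * eC q (-((a : ℤ) * s))
      = χ⁻¹ (-(s : ZMod q)) * gaussSum χ (ZMod.stdAddChar) := by
    rw [← key (-(s : ZMod q))]
    refine Finset.sum_congr rfl fun a _ => ?_
    congr 1
    rw [eC_eq_stdAddChar]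
    congr 1
    push_cast
    ring
  have conj_gauss : (starRingEnd ℂ) (gaussC (conjChar χ))
      = χ⁻¹ (-(1 : ZMod q)) * gaussSum χ (ZMod.stdAddChar) := by
    rw [← key (-(1 : ZMod q))]
    rw [gaussC, map_sum]
    refine Finset.sum_congr rfl fun a _ => ?_
    rw [map_mul, conjChar_apply, Complex.conj_conj, conj_eC, eC_eq_stdAddChar]
    congr 1
    push_cast
    ring
  rw [lhs_eq, conj_gauss, conjChar_eq_inv,
    show -(s : ZMod q) = (-1) * (s : ZMod q) by ring, map_mul]
  ring

private lemma inner_T (χ : DirichletCharacter ℂ q) (hχ : χ.IsPrimitive)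
    (t r : ℕ) (ht : 0 < t) :
    ∑ c ∈ Finset.Icc 1 (q * t), χ ((c : ℕ) : ZMod q) * eC (q * t) (-((c : ℤ) * r)) =
      if t ∣ r then (starRingEnd ℂ) (gaussC (conjChar χ)) *
        conjChar χ ((r / t : ℕ) : ZMod q) * t
      else 0 := by
  haveI : NeZero t := ⟨ht.ne'⟩
  haveI : NeZero (q * t) := ⟨mul_ne_zero (NeZero.ne q) ht.ne'⟩
  set f : ℕ → ℂ := fun c => χ ((c : ℕ) : ZMod q) * eC (q * t) (-((c : ℤ) * r)) with hf
  have hper : f (q * t) = f 0 := by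
    have e1 : (((q * t : ℕ) : ℤ) : ZMod (q * t)) = 0 := by
      rw [Int.cast_natCast, ZMod.natCast_self]
    simp only [hf]
    congr 1
    · push_cast
      simp
    · rw [eC_eq_stdAddChar, eC_eq_stdAddChar]
      congr 1
      rw [show (-(((q * t : ℕ) : ℤ) * r)) = ((q * t : ℕ) : ℤ) * (-(r : ℤ)) by ring,
        Int.cast_mul, e1, zero_mul]
      simp
  have hsplit : ∀ a b : ℕ, f (a + q * b)
      = (χ ((a : ℕ) : ZMod q) * eC (q * t) (-((a : ℤ) * r))) * eC t (-((b : ℤ) * r)) := by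
    intro a b
    simp only [hf]
    have h1 : χ (((a + q * b : ℕ)) : ZMod q) = χ ((a : ℕ) : ZMod q) := by
      congr 1
      push_cast
      simp
    have h2 : eC (q * t) (-((a + q * b : ℕ) * r : ℤ))
        = eC (q * t) (-((a : ℤ) * r)) * eC t (-((b : ℤ) * r)) := by
      have h3 : (-((a + q * b : ℕ) * r : ℤ)) = (-((a : ℤ) * r)) + (q : ℤ) * (-((b : ℤ) * r)) := by
        push_cast
        ring
      rw [h3, eC_eq_stdAddChar, Int.cast_add, AddChar.map_add_eq_mul,
        ← eC_eq_stdAddChar, ← eC_eq_stdAddChar]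
      congr 1
      rw [eC_mul_left (dvd_mul_right q t) (NeZero.pos q),
        Nat.mul_div_cancel_left _ (NeZero.pos q)]
    rw [h1, h2, mul_assoc]
  calc ∑ c ∈ Finset.Icc 1 (q * t), χ ((c : ℕ) : ZMod q) * eC (q * t) (-((c : ℤ) * r))
      = ∑ c ∈ Finset.range (q * t), f c := sum_Icc_eq_range f hper
    _ = ∑ b ∈ Finset.range t, ∑ a ∈ Finset.range q, f (a + q * b) := sum_range_mul' f q t
    _ = (∑ a ∈ Finset.range q, χ ((a : ℕ) : ZMod q) * eC (q * t) (-((a : ℤ) * r)))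
          * ∑ b ∈ Finset.range t, eC t (-((b : ℤ) * r)) := by
        rw [Finset.sum_mul_sum]
        rw [Finset.sum_comm]
        exact Finset.sum_congr rfl fun a _ => Finset.sum_congr rfl fun b _ => hsplit a b
    _ = _ := by
        rw [sum_eC_geom t r]
        by_cases hdvd : t ∣ r
        · rw [if_pos hdvd, if_pos hdvd]
          obtain ⟨u, rfl⟩ := hdvd
          have hu : (t * u) / t = u := Nat.mul_div_cancel_left u ht
          have heach : ∀ a : ℕ, eC (q * t) (-((a : ℤ) * ((t * u : ℕ) : ℤ)))
              = eC q (-((a : ℤ) * u)) := by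
            intro a
            rw [show (-((a : ℤ) * ((t * u : ℕ) : ℤ))) = (t : ℕ) * (-((a : ℤ) * u)) by push_cast; ring,
              eC_mul_left (dvd_mul_left t q) ht, Nat.mul_div_cancel _ ht]
          simp_rw [heach]
          rw [gauss_key χ hχ u, hu]
        · rw [if_neg hdvd, if_neg hdvd, mul_zero]

private lemma moebius_indicator (n : ℕ) :
    ∑ e ∈ n.divisors, ((ArithmeticFunction.moebius e : ℤ) : ℂ) = if n = 1 then 1 else 0 := by
  have h := congrArg (fun f : ArithmeticFunction ℤ => f n)
    ArithmeticFunction.moebius_mul_coe_zeta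
  simp only [ArithmeticFunction.coe_mul_zeta_apply, ArithmeticFunction.one_apply] at h
  calc ∑ e ∈ n.divisors, ((ArithmeticFunction.moebius e : ℤ) : ℂ)
      = ((∑ e ∈ n.divisors, ArithmeticFunction.moebius e : ℤ) : ℂ) := by push_cast; rfl
    _ = _ := by rw [h]; split_ifs <;> simp

private lemma divisors_gcd_eq {r m : ℕ} (hm : 0 < m) :
    (Nat.gcd r m).divisors = m.divisors.filter (· ∣ r) := by
  ext n
  simp only [Nat.mem_divisors, Finset.mem_filter, Nat.dvd_gcd_iff]
  constructor
  · rintro ⟨⟨h1, h2⟩, -⟩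
    exact ⟨⟨h2, hm.ne'⟩, h1⟩
  · rintro ⟨⟨h2, -⟩, h1⟩
    refine ⟨⟨h1, h2⟩, fun hg => hm.ne' (Nat.eq_zero_of_gcd_eq_zero_right hg)⟩

private lemma sum_filter_dvd {D e : ℕ} (he : e ∣ D) (he0 : 0 < e) (g : ℕ → ℂ) :
    ∑ c ∈ (Finset.Icc 1 D).filter (fun c => e ∣ c), g c
      = ∑ c ∈ Finset.Icc 1 (D / e), g (e * c) := by
  refine Finset.sum_nbij' (fun c => c / e) (fun c => e * c) ?_ ?_ ?_ ?_ ?_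
  · intro c hc
    obtain ⟨hc1, hc2⟩ := Finset.mem_filter.mp hc
    obtain ⟨h1, h2⟩ := Finset.mem_Icc.mp hc1
    exact Finset.mem_Icc.mpr ⟨(Nat.one_le_div_iff he0).mpr (Nat.le_of_dvd h1 hc2),
      Nat.div_le_div_right h2⟩
  · intro c hc
    obtain ⟨h1, h2⟩ := Finset.mem_Icc.mp hc
    refine Finset.mem_filter.mpr ⟨Finset.mem_Icc.mpr ⟨?_, ?_⟩, dvd_mul_right e c⟩
    · exact Nat.one_le_iff_ne_zero.mpr (by positivity)
    · calc e * c ≤ e * (D / e) := Nat.mul_le_mul_left e h2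
        _ = D := Nat.mul_div_cancel' he
  · intro c hc
    exact Nat.mul_div_cancel' (Finset.mem_filter.mp hc).2
  · intro c _
    exact Nat.mul_div_cancel_left c he0
  · intro c hc
    exact congrArg g (Nat.mul_div_cancel' (Finset.mem_filter.mp hc).2).symm

end helpers13

/-- explicit formula for `c_d(r,χ)` when `q ∣ d` (Lemma 7 of the paper). -/
theorem statement_13 (q : ℕ) [NeZero q] (χ : DirichletCharacter ℂ q) (hχ : χ.IsPrimitive)
    (d : ℕ) (hd : 0 < d) (hqd : q ∣ d) (r : ℕ) (hr : 0 < r) :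
    cdChi χ d r
      = (starRingEnd ℂ) (gaussC (conjChar χ)) *
          ∑ n ∈ (Nat.gcd r (d / q)).divisors,
            ((ArithmeticFunction.moebius ((d / q) / n) : ℤ) : ℂ) *
              χ (((d / q) / n : ℕ) : ZMod q) * conjChar χ ((r / n : ℕ) : ZMod q) * (n : ℂ) := by
  classical
  set m := d / q with hmdef
  have hdm : d = q * m := (Nat.mul_div_cancel' hqd).symm
  have hm0 : 0 < m := Nat.pos_of_ne_zero fun h => by rw [hdm, h, mul_zero] at hd; exact lt_irrefl 0 hd
  set G := (starRingEnd ℂ) (gaussC (conjChar χ)) with hG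
  set term : ℕ → ℂ := fun c => χ ((c : ℕ) : ZMod q) * eC d (-((c : ℤ) * r)) with hterm
  have step1 : cdChi χ d r = ∑ c ∈ Finset.Icc 1 d, term c *
      ∑ e ∈ m.divisors.filter (· ∣ c), ((ArithmeticFunction.moebius e : ℤ) : ℂ) := by
    rw [cdChi, Finset.sum_filter]
    refine Finset.sum_congr rfl fun c hc => ?_
    rw [← divisors_gcd_eq hm0, moebius_indicator]
    by_cases h2 : Nat.gcd c m = 1
    · rw [if_pos h2, mul_one]
      by_cases h3 : Nat.gcd c d = 1
      · rw [if_pos h3]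
      · rw [if_neg h3]
        have hcq : ¬ Nat.Coprime c q := fun hcq =>
          h3 (by rw [hdm]; exact Nat.Coprime.mul_right hcq h2)
        have hnu : ¬ IsUnit ((c : ℕ) : ZMod q) := by
          rw [ZMod.isUnit_iff_coprime]; exact hcq
        simp [hterm, MulChar.map_nonunit χ hnu]
    · rw [if_neg h2, mul_zero, if_neg]
      intro h3
      exact h2 (Nat.Coprime.coprime_dvd_right ⟨q, by rw [hdm, mul_comm]⟩ h3)
  have step2 : ∑ c ∈ Finset.Icc 1 d, term c *
        ∑ e ∈ m.divisors.filter (· ∣ c), ((ArithmeticFunction.moebius e : ℤ) : ℂ)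
      = ∑ e ∈ m.divisors, ((ArithmeticFunction.moebius e : ℤ) : ℂ) *
          ∑ c ∈ (Finset.Icc 1 d).filter (fun c => e ∣ c), term c := by
    simp_rw [Finset.sum_filter, Finset.mul_sum]
    rw [Finset.sum_comm]
    refine Finset.sum_congr rfl fun e _ => Finset.sum_congr rfl fun c _ => ?_
    by_cases h : e ∣ c <;> simp [h, mul_comm]
  have step3 : ∀ e ∈ m.divisors,
      ∑ c ∈ (Finset.Icc 1 d).filter (fun c => e ∣ c), term c
        = χ ((e : ℕ) : ZMod q) *
          (if (m / e) ∣ r then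
            G * conjChar χ ((r / (m / e) : ℕ) : ZMod q) * ((m / e : ℕ) : ℂ) else 0) := by
    intro e he
    obtain ⟨hem, -⟩ := Nat.mem_divisors.mp he
    have he0 : 0 < e := Nat.pos_of_dvd_of_pos hem hm0
    have hed : e ∣ d := hem.trans ⟨q, by rw [hdm, mul_comm]⟩
    have hde : d / e = q * (m / e) := by rw [hdm, Nat.mul_div_assoc q hem]
    have ht0 : 0 < m / e := Nat.div_pos (Nat.le_of_dvd hm0 hem) he0
    rw [sum_filter_dvd hed he0]
    have hval : ∀ c : ℕ, term (e * c)
        = χ ((e : ℕ) : ZMod q) * (χ ((c : ℕ) : ZMod q) * eC (d / e) (-((c : ℤ) * r))) := by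
      intro c
      simp only [hterm]
      rw [show (-(((e * c : ℕ) : ℤ) * r)) = (e : ℕ) * (-((c : ℤ) * r)) by push_cast; ring,
        eC_mul_left hed he0,
        show (((e * c : ℕ)) : ZMod q) = ((e : ℕ) : ZMod q) * ((c : ℕ) : ZMod q) by
          push_cast; ring,
        map_mul]
      ring
    simp_rw [hval]
    rw [← Finset.mul_sum]
    congr 1
    rw [hde]
    exact inner_T χ hχ (m / e) r ht0
  rw [step1, step2, Finset.sum_congr rfl fun e he => by rw [step3 e he]]
  set H : ℕ → ℂ := fun n => ((ArithmeticFunction.moebius (m / n) : ℤ) : ℂ) *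
      (χ (((m / n : ℕ)) : ZMod q) *
        (if n ∣ r then G * conjChar χ ((r / n : ℕ) : ZMod q) * ((n : ℕ) : ℂ) else 0)) with hH
  have step4 : ∑ e ∈ m.divisors, ((ArithmeticFunction.moebius e : ℤ) : ℂ) *
        (χ ((e : ℕ) : ZMod q) *
          (if (m / e) ∣ r then
            G * conjChar χ ((r / (m / e) : ℕ) : ZMod q) * ((m / e : ℕ) : ℂ) else 0))
      = ∑ n ∈ m.divisors, H n := by
    rw [← Nat.sum_div_divisors m H]
    refine Finset.sum_congr rfl fun e he => ?_
    obtain ⟨hem, hmne⟩ := Nat.mem_divisors.mp he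
    simp only [hH, Nat.div_div_self hem hmne]
  rw [step4, divisors_gcd_eq hm0, Finset.mul_sum, Finset.sum_filter]
  refine Finset.sum_congr rfl fun n _ => ?_
  simp only [hH]
  by_cases h : n ∣ r
  · rw [if_pos h, if_pos h]
    ring
  · rw [if_neg h, if_neg h]
    ring
end
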